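/- arXiv:1509.06430 — 6 statements merged into one kernel-verified Lean document; each statement's English description precedes it below -/
import Mathlib

section
/- Let V be a dependency-clique of bad events (i.e., B ~ B' for all B, B' in V). Suppose the Shearer criterion is satisfied with ε-slack, i.e., the probability vector (1+ε)P_Ω satisfies the Shearer criterion. Then for any ρ with 0 ≤ ρ < ε, the sum over B in V of Q({B}, (1+ρ)P_Ω) / Q(∅, (1+ρ)P_Ω) is at most (1+ρ)/(ε−ρ). -/
/-!
An independent set meets a dependency-clique `V` in at most one event. Hence scaling the
weights on `V` by a common factor `t` changes `Q(∅, ·)` affinely in `t`, and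
`∑_{B ∈ V} Q({B}, q) = Q(∅, q off V) - Q(∅, q)`. Below a Shearer vector `p`, `Q(∅, ·)` is at
least `Q(∅, p) > 0`, by the expansion `Q(∅, q) = ∑_I c^I Q(I, p)` for `q = p (1 - c)`.
Scaling `(1+ρ)P` by `(1+ε)/(1+ρ)` on `V` stays below `(1+ε)P`, so `Q(∅, ·)` is still positive
there, and affinity turns this into the bound.
-/

open scoped BigOperators ENNReal Classical

namespace LLL

/-- Two bad events are dependent iff their variable sets intersect. -/
def Dep {n : ℕ} {E : Type} (S : E → Finset (Fin n)) (b b' : E) : Prop :=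
  (S b ∩ S b').Nonempty

/-- A witness DAG: a finite DAG with nodes labeled by bad events, where any two
nodes with dependent labels are joined by an edge (in one direction), and nodes
with non-dependent labels have no edge. -/
structure WDag (n : ℕ) (E : Type) (S : E → Finset (Fin n)) where
  size : ℕ
  label : Fin size → E
  edge : Fin size → Fin size → Prop
  acyclic : ∀ v, ¬ Relation.TransGen edge v v
  edge_dep : ∀ v w, edge v w → Dep S (label v) (label w)
  dep_edge : ∀ v w, v ≠ w → Dep S (label v) (label w) → edge v w ∨ edge w v

namespace WDag

variable {n : ℕ} {E : Type} {S : E → Finset (Fin n)}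

/-- Isomorphism of witness DAGs. -/
def Iso (G G' : WDag n E S) : Prop :=
  ∃ e : Fin G.size ≃ Fin G'.size,
    (∀ v, G'.label (e v) = G.label v) ∧ ∀ v w, G'.edge (e v) (e w) ↔ G.edge v w

theorem Iso.refl (G : WDag n E S) : Iso G G :=
  ⟨Equiv.refl _, fun _ => rfl, fun _ _ => Iff.rfl⟩

theorem Iso.symm {G G' : WDag n E S} (h : Iso G G') : Iso G' G := by
  obtain ⟨e, hl, he⟩ := h
  refine ⟨e.symm, fun v => ?_, fun v w => ?_⟩
  · simpa using (hl (e.symm v)).symm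
  · simpa using (he (e.symm v) (e.symm w)).symm

theorem Iso.trans {G₁ G₂ G₃ : WDag n E S} (h12 : Iso G₁ G₂) (h23 : Iso G₂ G₃) :
    Iso G₁ G₃ := by
  obtain ⟨e, hl, he⟩ := h12
  obtain ⟨f, hl', he'⟩ := h23
  refine ⟨e.trans f, fun v => ?_, fun v w => ?_⟩
  · rw [Equiv.trans_apply, hl' (e v), hl v]
  · rw [Equiv.trans_apply, Equiv.trans_apply, he' (e v) (e w), he v w]

instance wdSetoid (n : ℕ) (E : Type) (S : E → Finset (Fin n)) : Setoid (WDag n E S) :=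
  ⟨Iso, ⟨Iso.refl, Iso.symm, Iso.trans⟩⟩

/-- Isomorphism classes of witness DAGs. -/
def WClass (n : ℕ) (E : Type) (S : E → Finset (Fin n)) : Type :=
  Quotient (wdSetoid n E S)

/-- The weight of a witness DAG: the product of the probabilities of its labels. -/
noncomputable def wt (P : E → ℝ) (G : WDag n E S) : ℝ := ∏ v, P (G.label v)

theorem wt_invariant (P : E → ℝ) {G G' : WDag n E S} (h : Iso G G') :
    wt P G = wt P G' := by
  obtain ⟨e, hl, _⟩ := h
  exact Fintype.prod_equiv e (fun v => P (G.label v)) (fun v => P (G'.label v))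
    (fun v => by simp only [hl v])

/-- The weight, as a function on isomorphism classes. -/
noncomputable def cwt (P : E → ℝ) : WClass n E S → ℝ :=
  Quotient.lift (wt P) fun _ _ h => wt_invariant P h

theorem size_invariant {G G' : WDag n E S} (h : Iso G G') : G.size = G'.size := by
  obtain ⟨e, -, -⟩ := h
  simpa using Fintype.card_congr e

/-- The adjusted weight `a_ρ(G) = w(G) (1+ρ)^{|G|}`. -/
noncomputable def awt (P : E → ℝ) (ρ : ℝ) (G : WDag n E S) : ℝ :=
  wt P G * (1 + ρ) ^ G.size

theorem awt_invariant (P : E → ℝ) (ρ : ℝ) {G G' : WDag n E S} (h : Iso G G') :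
    awt P ρ G = awt P ρ G' := by
  unfold awt
  rw [wt_invariant P h, size_invariant h]

/-- The adjusted weight, as a function on isomorphism classes. -/
noncomputable def cawt (P : E → ℝ) (ρ : ℝ) : WClass n E S → ℝ :=
  Quotient.lift (awt P ρ) fun _ _ h => awt_invariant P ρ h

/-- A node is a sink if it has no outgoing edge. -/
def IsSink (G : WDag n E S) (v : Fin G.size) : Prop := ∀ w, ¬ G.edge v w

/-- A witness DAG has a single sink. -/
def SingleSink (G : WDag n E S) : Prop := ∃! v, IsSink G v

/-- A witness DAG has a single sink, labeled by `b`. -/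
def SinkLabeled (G : WDag n E S) (b : E) : Prop :=
  ∃ v, IsSink G v ∧ G.label v = b ∧ ∀ w, IsSink G w → w = v

end WDag

/-- A set of bad events is independent if no two distinct members are dependent. -/
def Indep {n : ℕ} {E : Type} (S : E → Finset (Fin n)) (I : Finset E) : Prop :=
  ∀ b ∈ I, ∀ b' ∈ I, b ≠ b' → ¬ Dep S b b'

/-- The independent-set polynomial `Q(I,p)`. -/
noncomputable def Q {n : ℕ} {E : Type} [Fintype E] (S : E → Finset (Fin n))
    (p : E → ℝ) (I : Finset E) : ℝ :=
  ∑ J ∈ Finset.univ.filter (fun J : Finset E => I ⊆ J ∧ Indep S J),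
    (-1 : ℝ) ^ (J.card - I.card) * ∏ b ∈ J, p b

/-- The Shearer criterion for the probability vector `p`. -/
def Shearer {n : ℕ} {E : Type} [Fintype E] (S : E → Finset (Fin n)) (p : E → ℝ) : Prop :=
  0 < Q S p ∅ ∧ ∀ I : Finset E, Indep S I → 0 ≤ Q S p I

section

variable {n : ℕ} {E : Type} {S : E → Finset (Fin n)}

theorem Indep.subset {I J : Finset E} (hJ : Indep S J) (hIJ : I ⊆ J) : Indep S I :=
  fun b hb b' hb' => hJ b (hIJ hb) b' (hIJ hb')

theorem Indep.card_inter_le_one {J V : Finset E} (hJ : Indep S J)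
    (hV : ∀ b ∈ V, ∀ b' ∈ V, Dep S b b') : (J ∩ V).card ≤ 1 := by
  refine Finset.card_le_one.2 fun b hb b' hb' => ?_
  rw [Finset.mem_inter] at hb hb'
  by_contra hne
  exact hJ b hb.1 b' hb'.1 hne (hV b hb.2 b' hb'.2)

noncomputable def scaleOn (V : Finset E) (t : ℝ) (q : E → ℝ) : E → ℝ :=
  fun b => if b ∈ V then t * q b else q b

theorem prod_scaleOn (V J : Finset E) (t : ℝ) (q : E → ℝ) :
    ∏ b ∈ J, scaleOn V t q b = t ^ (J ∩ V).card * ∏ b ∈ J, q b := by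
  have h : ∀ b, scaleOn V t q b = (if b ∈ V then t else 1) * q b := fun b => by
    by_cases hb : b ∈ V <;> simp [scaleOn, hb]
  simp only [h, Finset.prod_mul_distrib, Finset.prod_ite_mem, Finset.prod_const]

variable [Fintype E]

theorem Q_eq_sum_indep (p : E → ℝ) (I : Finset E) :
    Q S p I = ∑ J ∈ Finset.univ.filter (Indep S),
      if I ⊆ J then (-1 : ℝ) ^ (J.card - I.card) * ∏ b ∈ J, p b else 0 := by
  rw [Q, Finset.sum_filter, Finset.sum_filter]
  exact Finset.sum_congr rfl fun J _ => by by_cases h : I ⊆ J <;> simp [h]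

theorem Q_empty_eq_sum_indep (p : E → ℝ) :
    Q S p ∅ = ∑ J ∈ Finset.univ.filter (Indep S), (-1 : ℝ) ^ J.card * ∏ b ∈ J, p b := by
  simp [Q_eq_sum_indep]

theorem Q_singleton_eq_sum_indep (p : E → ℝ) (B : E) :
    Q S p {B} = ∑ J ∈ Finset.univ.filter (Indep S),
      if B ∈ J then (-1 : ℝ) ^ (J.card - 1) * ∏ b ∈ J, p b else 0 := by
  simp [Q_eq_sum_indep]

theorem Q_empty_eq_sum_prod_mul_Q {p q c : E → ℝ} (hc : ∀ b, q b = p b * (1 - c b)) :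
    Q S q ∅ = ∑ I ∈ Finset.univ.filter (Indep S), (∏ b ∈ I, c b) * Q S p I := by
  have hterm : ∀ J ∈ Finset.univ.filter (Indep S), (-1 : ℝ) ^ J.card * ∏ b ∈ J, q b =
      ∑ I ∈ Finset.univ.filter (Indep S), (∏ b ∈ I, c b) *
        if I ⊆ J then (-1 : ℝ) ^ (J.card - I.card) * ∏ b ∈ J, p b else 0 := by
    intro J hJ
    have hsubsets : (Finset.univ.filter (Indep S)).filter (· ⊆ J) = J.powerset := by
      ext I
      simp only [Finset.mem_filter, Finset.mem_univ, true_and, Finset.mem_powerset]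
      exact ⟨And.right, fun hIJ => ⟨(Finset.mem_filter.1 hJ).2.subset hIJ, hIJ⟩⟩
    simp only [mul_ite, mul_zero]
    rw [← Finset.sum_filter, hsubsets]
    calc (-1 : ℝ) ^ J.card * ∏ b ∈ J, q b
        = (∏ b ∈ J, p b) * ∏ b ∈ J, (-1 * (1 - c b)) := by
          simp only [hc, Finset.prod_mul_distrib, Finset.prod_const]
          ring
      _ = (∏ b ∈ J, p b) * ∏ b ∈ J, (c b + -1) := by
          congr 1
          exact Finset.prod_congr rfl fun b _ => by ring
      _ = _ := by
          rw [Finset.prod_add, Finset.mul_sum]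
          refine Finset.sum_congr rfl fun I hI => ?_
          rw [Finset.prod_const, Finset.card_sdiff_of_subset (Finset.mem_powerset.1 hI)]
          ring
  rw [Q_empty_eq_sum_indep, Finset.sum_congr rfl hterm, Finset.sum_comm]
  simp only [← Finset.mul_sum, ← Q_eq_sum_indep]

theorem Shearer.Q_empty_le {p q : E → ℝ} (hp : Shearer S p) (hq0 : ∀ b, 0 ≤ q b)
    (hqp : ∀ b, q b ≤ p b) : Q S p ∅ ≤ Q S q ∅ := by
  set c : E → ℝ := fun b => 1 - q b / p b
  have hc : ∀ b, q b = p b * (1 - c b) := fun b => by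
    by_cases hpb : p b = 0
    · have hqb : q b = 0 := le_antisymm (hpb ▸ hqp b) (hq0 b)
      simp [hpb, hqb]
    · simp only [c, sub_sub_cancel]
      field_simp
  have hc0 : ∀ b, 0 ≤ c b := fun b =>
    sub_nonneg.2 (div_le_one_of_le₀ (hqp b) ((hq0 b).trans (hqp b)))
  calc Q S p ∅ = (∏ b ∈ ∅, c b) * Q S p ∅ := by rw [Finset.prod_empty, one_mul]
    _ ≤ ∑ I ∈ Finset.univ.filter (Indep S), (∏ b ∈ I, c b) * Q S p I :=
        Finset.single_le_sum (f := fun I => (∏ b ∈ I, c b) * Q S p I)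
          (fun I hI => mul_nonneg (Finset.prod_nonneg fun b _ => hc0 b)
            (hp.2 I (Finset.mem_filter.1 hI).2))
          (Finset.mem_filter.2 ⟨Finset.mem_univ _, by simp [Indep]⟩)
    _ = Q S q ∅ := (Q_empty_eq_sum_prod_mul_Q hc).symm

theorem Shearer.Q_empty_pos_of_le {p q : E → ℝ} (hp : Shearer S p) (hq0 : ∀ b, 0 ≤ q b)
    (hqp : ∀ b, q b ≤ p b) : 0 < Q S q ∅ :=
  hp.1.trans_le (hp.Q_empty_le hq0 hqp)

variable {V : Finset E}

theorem Q_scaleOn_of_clique (hV : ∀ b ∈ V, ∀ b' ∈ V, Dep S b b') (t : ℝ) (q : E → ℝ) :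
    Q S (scaleOn V t q) ∅ =
      Q S (scaleOn V 0 q) ∅ + t * (Q S q ∅ - Q S (scaleOn V 0 q) ∅) := by
  simp only [Q_empty_eq_sum_indep, prod_scaleOn, Finset.mul_sum, ← Finset.sum_sub_distrib,
    ← Finset.sum_add_distrib]
  refine Finset.sum_congr rfl fun J hJ => ?_
  have hcard := (Finset.mem_filter.1 hJ).2.card_inter_le_one hV
  interval_cases (J ∩ V).card <;> ring

theorem sum_Q_singleton_of_clique (hV : ∀ b ∈ V, ∀ b' ∈ V, Dep S b b') (q : E → ℝ) :
    ∑ B ∈ V, Q S q {B} = Q S (scaleOn V 0 q) ∅ - Q S q ∅ := by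
  simp only [Q_singleton_eq_sum_indep, Q_empty_eq_sum_indep, prod_scaleOn]
  rw [Finset.sum_comm, ← Finset.sum_sub_distrib]
  refine Finset.sum_congr rfl fun J hJ => ?_
  rw [Finset.sum_ite_mem, Finset.sum_const, nsmul_eq_mul, Finset.inter_comm]
  have hcard := (Finset.mem_filter.1 hJ).2.card_inter_le_one hV
  interval_cases h : (J ∩ V).card
  · simp
  · have hJ1 : 1 ≤ J.card := h ▸ Finset.card_le_card Finset.inter_subset_left
    obtain ⟨m, hm⟩ : ∃ m, J.card = m + 1 := ⟨J.card - 1, by omega⟩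
    rw [hm, Nat.add_sub_cancel, pow_succ]
    ring

end

theorem stmt0_general {n : ℕ} {E : Type} [Fintype E] (S : E → Finset (Fin n)) (P : E → ℝ)
    (hP0 : ∀ b, 0 ≤ P b) (ε ρ : ℝ)
    (hslack : Shearer S (fun b => (1 + ε) * P b))
    (hρ0 : 0 ≤ ρ) (hρε : ρ < ε)
    (V : Finset E) (hV : ∀ b ∈ V, ∀ b' ∈ V, Dep S b b') :
    ∑ b ∈ V, Q S (fun b' => (1 + ρ) * P b') {b} / Q S (fun b' => (1 + ρ) * P b') ∅
      ≤ (1 + ρ) / (ε - ρ) := by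
  set p : E → ℝ := fun b' => (1 + ρ) * P b'
  have hρ : 0 < 1 + ρ := by linarith
  have hp0 : ∀ b, 0 ≤ p b := fun b => mul_nonneg hρ.le (hP0 b)
  have hpε : ∀ b, p b ≤ (1 + ε) * P b := fun b =>
    mul_le_mul_of_nonneg_right (by linarith) (hP0 b)
  set s := (1 + ε) / (1 + ρ)
  have hs : (1 + ρ) * s = 1 + ε := mul_div_cancel₀ _ hρ.ne'
  have hD : 0 < Q S p ∅ := hslack.Q_empty_pos_of_le hp0 hpε
  have hsp : ∀ b, scaleOn V s p b = if b ∈ V then (1 + ε) * P b else p b := fun b => by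
    rw [scaleOn, ← mul_assoc, mul_comm s, hs]
  have hDs : 0 < Q S (scaleOn V s p) ∅ := by
    refine hslack.Q_empty_pos_of_le (fun b => ?_) (fun b => ?_) <;> rw [hsp] <;> split_ifs
    exacts [mul_nonneg (by linarith) (hP0 b), hp0 b, le_rfl, hpε b]
  rw [Q_scaleOn_of_clique hV] at hDs
  rw [← Finset.sum_div, sum_Q_singleton_of_clique hV, div_le_div_iff₀ hD (sub_pos.2 hρε)]
  have hpos := mul_pos hρ hDs
  rw [mul_add, ← mul_assoc, hs] at hpos
  linarith

/-- If the Shearer criterion holds with ε-slack and V is a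
dependency-clique, then for 0 ≤ ρ < ε,
Σ_{B∈V} Q({B},(1+ρ)P)/Q(∅,(1+ρ)P) ≤ (1+ρ)/(ε-ρ). -/
theorem stmt0 {n : ℕ} {E : Type} [Fintype E] (S : E → Finset (Fin n)) (P : E → ℝ)
    (hP0 : ∀ b, 0 ≤ P b) (hP1 : ∀ b, P b ≤ 1) (ε ρ : ℝ)
    (hslack : Shearer S (fun b => (1 + ε) * P b))
    (hρ0 : 0 ≤ ρ) (hρε : ρ < ε)
    (V : Finset E) (hV : ∀ b ∈ V, ∀ b' ∈ V, Dep S b b') :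
    ∑ b ∈ V, Q S (fun b' => (1 + ρ) * P b') {b} / Q S (fun b' => (1 + ρ) * P b') ∅
      ≤ (1 + ρ) / (ε - ρ) :=
  stmt0_general S P hP0 ε ρ hslack hρ0 hρε V hV

end LLL
end

section
/- Let A be a finite set of integers and h, s positive integers, and suppose that for each integer j there is a set I_j ⊆ A with |I_j| ≤ h. Then the number of strictly decreasing s-tuples (i_1 > i_2 > … > i_s) of elements of A satisfying i_j ∉ I_{i_1} ∪ I_{i_2} ∪ … ∪ I_{i_{j−1}} for every j = 1, …, s is at least the binomial coefficient C(|A| − (s−1)h, s). -/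
/-!
Induct on `A`. With `a = max A`, every chain in `A.erase a` is a chain in `A`, and prepending `a`
to a chain in `A.erase a \ I a` also gives one; these two families are disjoint. The second set
has at least `|A| - 1 - h` elements, so the induction hypothesis and Pascal's rule close the step.
-/

open Finset

variable {α : Type*} [LinearOrder α]

def avoidingChains (I : α → Finset α) (A : Finset α) (s : ℕ) : Finset (Fin s → α) :=
  (Fintype.piFinset fun _ => A).filter fun f =>
    (∀ j k : Fin s, j < k → f k < f j) ∧ (∀ j k : Fin s, k < j → f j ∉ I (f k))

variable {I : α → Finset α} {A B : Finset α} {s : ℕ}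

theorem mem_avoidingChains {f : Fin s → α} :
    f ∈ avoidingChains I A s ↔ (∀ j, f j ∈ A) ∧ (∀ j k : Fin s, j < k → f k < f j) ∧
      (∀ j k : Fin s, k < j → f j ∉ I (f k)) := by
  simp [avoidingChains, Fintype.mem_piFinset]

theorem avoidingChains_mono (hAB : A ⊆ B) : avoidingChains I A s ⊆ avoidingChains I B s :=
  fun f hf => by
    rw [mem_avoidingChains] at hf ⊢
    exact ⟨fun j => hAB (hf.1 j), hf.2⟩

theorem cons_mem_avoidingChains_iff {a : α} {g : Fin s → α} :
    (Fin.cons a g : Fin (s + 1) → α) ∈ avoidingChains I A (s + 1) ↔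
      a ∈ A ∧ (∀ j, g j < a ∧ g j ∉ I a) ∧ g ∈ avoidingChains I A s := by
  simp only [mem_avoidingChains, Fin.forall_fin_succ, Fin.cons_zero, Fin.cons_succ,
    Fin.succ_lt_succ_iff, Fin.succ_pos, Fin.not_lt_zero, lt_irrefl, forall_and]
  tauto

theorem avoidingChains_zero_nonempty : (avoidingChains I A 0).Nonempty :=
  ⟨Fin.elim0, mem_avoidingChains.2 (by simp)⟩

theorem card_add_card_le_card_avoidingChains_succ {a : α} (ha : a ∈ A) (hmax : ∀ x ∈ A, x ≤ a) :
    (avoidingChains I (A.erase a) (s + 1)).card + (avoidingChains I (A.erase a \ I a) s).card ≤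
      (avoidingChains I A (s + 1)).card := by
  rw [← card_map (s := avoidingChains I (A.erase a \ I a) s)
    ⟨_, Fin.cons_right_injective (α := fun _ => α) a⟩, ← card_union_of_disjoint]
  · refine card_le_card (union_subset (avoidingChains_mono (erase_subset a A)) ?_)
    simp only [subset_iff, mem_map, Function.Embedding.coeFn_mk]
    rintro _ ⟨g, hg, rfl⟩
    have hgA : ∀ j, g j ∈ A.erase a \ I a := (mem_avoidingChains.1 hg).1
    refine cons_mem_avoidingChains_iff.2 ⟨ha, fun j => ?_, avoidingChains_mono ?_ hg⟩
    · obtain ⟨hne, hjA⟩ := mem_erase.1 (mem_sdiff.1 (hgA j)).1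
      exact ⟨(hmax _ hjA).lt_of_ne hne, (mem_sdiff.1 (hgA j)).2⟩
    · exact sdiff_subset.trans (erase_subset a A)
  · simp only [disjoint_left, mem_map, Function.Embedding.coeFn_mk, not_exists, not_and]
    rintro f hf g - rfl
    simpa using (mem_avoidingChains.1 hf).1 0

theorem Nat.choose_succ_sub_mul_le {n m h s : ℕ} (hm : n - h ≤ m) :
    (n + 1 - s * h).choose (s + 1) ≤ (n - s * h).choose (s + 1) + (m - (s - 1) * h).choose s := by
  rcases s with _ | t
  · simp
  · calc (n + 1 - (t + 1) * h).choose (t + 2)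
        ≤ (n - (t + 1) * h + 1).choose (t + 2) := Nat.choose_le_choose _ (by omega)
      _ = (n - (t + 1) * h).choose (t + 1) + (n - (t + 1) * h).choose (t + 2) :=
          Nat.choose_succ_succ _ _
      _ ≤ (n - (t + 1) * h).choose (t + 2) + (m - t * h).choose (t + 1) := by
          have : (t + 1) * h = t * h + h := by ring
          rw [add_comm]
          exact Nat.add_le_add_left (Nat.choose_le_choose _ (by omega)) _
      _ = _ := by simp

theorem choose_le_card_avoidingChains {h : ℕ} (hI : ∀ j, (I j).card ≤ h) (A : Finset α) (s : ℕ) :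
    (A.card - (s - 1) * h).choose s ≤ (avoidingChains I A s).card := by
  induction A using Finset.strongInduction generalizing s with
  | H A ih =>
  rcases s with _ | s
  · simpa using avoidingChains_zero_nonempty
  rcases A.eq_empty_or_nonempty with rfl | hA
  · simp
  set a := A.max' hA
  have ha : a ∈ A := A.max'_mem hA
  have hcard : A.card = (A.erase a).card + 1 := (card_erase_add_one ha).symm
  have hsdiff : (A.erase a).card - h ≤ (A.erase a \ I a).card :=
    (Nat.sub_le_sub_left (hI a) _).trans (le_card_sdiff _ _)
  calc (A.card - (s + 1 - 1) * h).choose (s + 1)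
      ≤ ((A.erase a).card - s * h).choose (s + 1) +
          ((A.erase a \ I a).card - (s - 1) * h).choose s := by
        simpa [hcard] using Nat.choose_succ_sub_mul_le hsdiff
    _ ≤ (avoidingChains I (A.erase a) (s + 1)).card +
          (avoidingChains I (A.erase a \ I a) s).card :=
        add_le_add (by simpa using ih _ (erase_ssubset ha) (s + 1))
          (ih _ (sdiff_subset.trans_ssubset (erase_ssubset ha)) _)
    _ ≤ (avoidingChains I A (s + 1)).card :=
        card_add_card_le_card_avoidingChains_succ ha fun x hx => A.le_max' x hx

theorem stmt7_general (A : Finset ℤ) (h s : ℕ)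
    (I : ℤ → Finset ℤ) (hIcard : ∀ j, (I j).card ≤ h) :
    Nat.choose (A.card - (s - 1) * h) s ≤
      Set.ncard {f : Fin s → ℤ |
        (∀ j, f j ∈ A) ∧
        (∀ j k : Fin s, j < k → f k < f j) ∧
        (∀ j k : Fin s, k < j → f j ∉ I (f k))} := by
  convert choose_le_card_avoidingChains hIcard A s using 1
  rw [← Set.ncard_coe_finset]
  congr 1
  ext f
  exact mem_avoidingChains.symm

/-- Let A be a finite set of integers and h, s positive integers,
and suppose for each integer j there is a set I_j ⊆ A with |I_j| ≤ h. Then the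
number of strictly decreasing s-tuples (i_1 > i_2 > … > i_s) of elements of A
with i_j ∉ I_{i_1} ∪ … ∪ I_{i_{j-1}} for every j is at least C(|A|-(s-1)h, s). -/
theorem stmt7 (A : Finset ℤ) (h s : ℕ) (hh : 0 < h) (hs : 0 < s)
    (I : ℤ → Finset ℤ) (hIA : ∀ j, I j ⊆ A) (hIcard : ∀ j, (I j).card ≤ h) :
    Nat.choose (A.card - (s - 1) * h) s ≤
      Set.ncard {f : Fin s → ℤ |
        (∀ j, f j ∈ A) ∧
        (∀ j k : Fin s, j < k → f k < f j) ∧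
        (∀ j k : Fin s, k < j → f j ∉ I (f k))} :=
  stmt7_general A h s I hIcard
end

section
/- Suppose each bad event is dependent with at most d ≥ 2 bad events (including itself) and there are m bad events in total. Then for every positive integer t, the number of isomorphism classes of collectible witness DAGs with exactly t nodes is at most m·e·(e·d)^t. -/
open scoped BigOperators ENNReal Classical

namespace LLL

/-- A witness DAG is collectible if there is a bad event dependent with the
labels of all of its sink nodes. -/
def WDag.Collectible {n : ℕ} {E : Type} {S : E → Finset (Fin n)} (G : WDag n E S) : Prop :=
  ∃ b : E, ∀ v, WDag.IsSink G v → Dep S b (G.label v)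

/-!
Layer a witness DAG by depth, the length of a longest path to a sink. In a collectible DAG every
label has a nonempty variable set, so two nodes with the same label are dependent and lie at
different depths, and an edge joins two nodes exactly when their labels are dependent, pointing
towards the smaller depth. Hence the DAG is determined up to isomorphism by its list of layers
`L₀, L₁, …`, where `L₀ ⊆ Γ({b})` for the event `b` it is collected to, `L_{k+1} ⊆ Γ(L_k)`, and
`Γ(A) = nbhd S A` has at most `d |A|` elements. Giving each event the weight `(e d)⁻¹`, the total
weight of such chains after `A` is, by induction, at most
`∑_{L ⊆ Γ(A)} d^{-|L|} = (1 + 1/d)^{|Γ(A)|} ≤ e^{|A|}`; so at most `e (e d)^t` chains after `{b}`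
carry `t` events in total.
-/

open Finset

variable {n : ℕ} {E : Type} {S : E → Finset (Fin n)}

theorem Dep.symm {a b : E} (h : Dep S a b) : Dep S b a := by
  rwa [Dep, inter_comm]

theorem sum_powerset_pow_card (M : Finset E) (x : ℝ) :
    ∑ L ∈ M.powerset, x ^ #L = (1 + x) ^ #M := by
  rw [add_comm, ← sum_pow_mul_eq_add_pow]
  simp only [one_pow, mul_one]

namespace WDag

variable {G G' : WDag n E S}

theorem wellFounded_flip_edge (G : WDag n E S) : WellFounded (flip G.edge) :=
  have : Std.Irrefl (Relation.TransGen (flip G.edge)) :=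
    ⟨fun v h => G.acyclic v (Relation.transGen_swap.mp h)⟩
  Subrelation.wf (fun h => Relation.TransGen.single h) (Finite.wellFounded_of_trans_of_irrefl _)

/-- The length of a longest path from `v` to a sink. -/
noncomputable def depth (G : WDag n E S) : Fin G.size → ℕ :=
  G.wellFounded_flip_edge.fix fun v ih =>
    univ.sup fun w => if h : G.edge v w then ih w h + 1 else 0

theorem depth_eq (G : WDag n E S) (v : Fin G.size) :
    G.depth v = univ.sup fun w => if G.edge v w then G.depth w + 1 else 0 := by
  rw [depth, WellFounded.fix_eq]
  simp only [dite_eq_ite]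

theorem depth_lt_of_edge {v w : Fin G.size} (h : G.edge v w) : G.depth w < G.depth v := by
  have := le_sup (f := fun w => if G.edge v w then G.depth w + 1 else 0) (mem_univ w)
  rw [if_pos h] at this
  rw [depth_eq G v]
  omega

theorem isSink_of_depth_eq_zero {v : Fin G.size} (h : G.depth v = 0) : G.IsSink v :=
  fun _ hw => by have := depth_lt_of_edge hw; omega

theorem exists_edge_of_depth_eq_add_one {v : Fin G.size} {k : ℕ} (h : G.depth v = k + 1) :
    ∃ w, G.edge v w ∧ G.depth w = k := by
  obtain ⟨w, -, hw⟩ := exists_mem_eq_sup univ ⟨v, mem_univ v⟩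
    fun w => if G.edge v w then G.depth w + 1 else 0
  rw [depth_eq G v, hw] at h
  by_cases he : G.edge v w
  · rw [if_pos he] at h
    exact ⟨w, he, by omega⟩
  · rw [if_neg he] at h
    omega

theorem exists_depth_eq_of_le {v : Fin G.size} {k : ℕ} (hk : k ≤ G.depth v) :
    ∃ w, G.depth w = k := by
  obtain ⟨m, hm⟩ := Nat.exists_eq_add_of_le hk
  clear hk
  induction m generalizing v with
  | zero => exact ⟨v, hm⟩
  | succ m ih =>
    obtain ⟨w, -, hw⟩ := exists_edge_of_depth_eq_add_one hm
    exact ih hw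

theorem Collectible.label_nonempty (hG : G.Collectible) (v : Fin G.size) :
    (S (G.label v)).Nonempty := by
  by_cases hv : G.IsSink v
  · obtain ⟨b, hb⟩ := hG
    exact (hb v hv).mono inter_subset_right
  · obtain ⟨w, hw⟩ := not_forall_not.mp hv
    exact (G.edge_dep v w hw).mono inter_subset_left

theorem Collectible.of_iso (hG : G.Collectible) (h : Iso G G') : G'.Collectible := by
  obtain ⟨e, hl, he⟩ := h
  obtain ⟨b, hb⟩ := hG
  refine ⟨b, fun v hv => ?_⟩
  have hsink : G.IsSink (e.symm v) := fun w hw =>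
    hv (e w) (by simpa using (he (e.symm v) w).mpr hw)
  simpa [← hl] using hb _ hsink

theorem eq_of_label_eq_of_depth_eq (hS : ∀ v, (S (G.label v)).Nonempty) {v w : Fin G.size}
    (hl : G.label v = G.label w) (hd : G.depth v = G.depth w) : v = w := by
  by_contra hne
  have hdep : Dep S (G.label v) (G.label w) := by
    rw [hl, Dep, inter_self]
    exact hS w
  rcases G.dep_edge v w hne hdep with h | h
  · exact (depth_lt_of_edge h).ne' hd
  · exact (depth_lt_of_edge h).ne hd

theorem edge_iff_dep_and_depth_lt (v w : Fin G.size) :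
    G.edge v w ↔ Dep S (G.label v) (G.label w) ∧ G.depth w < G.depth v := by
  refine ⟨fun h => ⟨G.edge_dep v w h, depth_lt_of_edge h⟩, fun ⟨hdep, hlt⟩ => ?_⟩
  rcases G.dep_edge v w (by rintro rfl; omega) hdep with h | h
  · exact h
  · exact absurd (depth_lt_of_edge h) hlt.not_gt

noncomputable def height (G : WDag n E S) : ℕ := univ.sup G.depth

noncomputable def layer (G : WDag n E S) (k : ℕ) : Finset E :=
  (univ.filter fun v => G.depth v = k).image G.label

noncomputable def layers (G : WDag n E S) : List (Finset E) :=
  (List.range (G.height + 1)).map G.layer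

theorem mem_layer {k : ℕ} {x : E} : x ∈ G.layer k ↔ ∃ v, G.depth v = k ∧ G.label v = x := by
  simp [layer]

theorem depth_le_height (v : Fin G.size) : G.depth v ≤ G.height :=
  le_sup (mem_univ v)

theorem layer_nonempty (hpos : 0 < G.size) {k : ℕ} (hk : k ≤ G.height) :
    (G.layer k).Nonempty := by
  obtain ⟨v, -, hv⟩ := exists_mem_eq_sup univ (univ_nonempty_iff.mpr ⟨⟨0, hpos⟩⟩) G.depth
  obtain ⟨w, hw⟩ := exists_depth_eq_of_le (hv ▸ hk : k ≤ G.depth v)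
  exact ⟨G.label w, mem_layer.mpr ⟨w, hw, rfl⟩⟩

theorem layer_eq_empty_of_height_lt {k : ℕ} (hk : G.height < k) : G.layer k = ∅ := by
  refine eq_empty_of_forall_notMem fun x hx => ?_
  obtain ⟨v, rfl, -⟩ := mem_layer.mp hx
  exact (depth_le_height v).not_gt hk

theorem layer_eq_of_layers_eq (h : G.layers = G'.layers) (k : ℕ) : G.layer k = G'.layer k := by
  have hH : G.height = G'.height := by simpa [layers] using congrArg List.length h
  by_cases hk : k ≤ G.height
  · simpa [layers, Nat.lt_succ_of_le hk, hH ▸ Nat.lt_succ_of_le hk] using congrArg (·[k]?) h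
  · rw [layer_eq_empty_of_height_lt (by omega), layer_eq_empty_of_height_lt (by omega)]

theorem card_layer (hS : ∀ v, (S (G.label v)).Nonempty) (k : ℕ) :
    #(G.layer k) = #(univ.filter fun v => G.depth v = k) :=
  card_image_of_injOn fun _ hv _ hw hl =>
    eq_of_label_eq_of_depth_eq hS hl ((mem_filter.mp hv).2.trans (mem_filter.mp hw).2.symm)

theorem sum_card_layers (hS : ∀ v, (S (G.label v)).Nonempty) :
    (G.layers.map card).sum = G.size := by
  have hsum : ∀ m (f : ℕ → ℕ), ((List.range m).map f).sum = ∑ k ∈ range m, f k := by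
    intro m f
    rw [Finset.sum, range_val, Multiset.range, Multiset.map_coe, Multiset.sum_coe]
  rw [layers, List.map_map, hsum, ← card_fin G.size, card_eq_sum_card_fiberwise
    fun v _ => mem_range.mpr (Nat.lt_succ_of_le (depth_le_height v))]
  exact sum_congr rfl fun k _ => card_layer hS k

theorem iso_of_layers_eq (hS : ∀ v, (S (G.label v)).Nonempty)
    (hS' : ∀ v, (S (G'.label v)).Nonempty) (h : G.layers = G'.layers) : Iso G G' := by
  have hf : ∀ v, ∃ v', G'.depth v' = G.depth v ∧ G'.label v' = G.label v := fun v =>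
    mem_layer.mp (layer_eq_of_layers_eq h _ ▸ mem_layer.mpr ⟨v, rfl, rfl⟩)
  have hg : ∀ v', ∃ v, G.depth v = G'.depth v' ∧ G.label v = G'.label v' := fun v' =>
    mem_layer.mp (layer_eq_of_layers_eq h.symm _ ▸ mem_layer.mpr ⟨v', rfl, rfl⟩)
  choose f hfd hfl using hf
  choose g hgd hgl using hg
  refine ⟨⟨f, g, fun v => ?_, fun v' => ?_⟩, hfl, fun v w => ?_⟩
  · exact eq_of_label_eq_of_depth_eq hS ((hgl _).trans (hfl v)) ((hgd _).trans (hfd v))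
  · exact eq_of_label_eq_of_depth_eq hS' ((hfl _).trans (hgl v')) ((hfd _).trans (hgd v'))
  · simp only [Equiv.coe_fn_mk, edge_iff_dep_and_depth_lt, hfl, hfd]

end WDag

section

variable [Fintype E]

noncomputable def nbhd (S : E → Finset (Fin n)) (A : Finset E) : Finset E :=
  A.biUnion fun a => univ.filter (Dep S a)

theorem card_nbhd_le {d : ℕ} (hdep : ∀ b : E, (univ.filter fun b' => Dep S b b').card ≤ d)
    (A : Finset E) : #(nbhd S A) ≤ d * #A :=
  card_biUnion_le_card_mul A _ d (fun a _ => hdep a) |>.trans_eq (mul_comm _ _)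

def IsLayerChain (S : E → Finset (Fin n)) (A : Finset E) (ℓ : List (Finset E)) : Prop :=
  List.IsChain (fun L L' => L'.Nonempty ∧ L' ⊆ nbhd S L) (A :: ℓ)

/-- The layer chains after `A` with at most `f` layers. -/
noncomputable def layerSeqs (S : E → Finset (Fin n)) : ℕ → Finset E → Finset (List (Finset E))
  | 0, _ => {[]}
  | f + 1, A => insert [] (((nbhd S A).powerset.erase ∅).biUnion fun L =>
      (layerSeqs S f L).image (L :: ·))

theorem mem_layerSeqs {A : Finset E} {ℓ : List (Finset E)} {f : ℕ}
    (hℓ : IsLayerChain S A ℓ) (hf : (ℓ.map card).sum ≤ f) : ℓ ∈ layerSeqs S f A := by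
  induction ℓ generalizing A f with
  | nil => cases f <;> simp [layerSeqs]
  | cons L ℓ ih =>
    obtain ⟨⟨hne, hsub⟩, hℓ⟩ := List.isChain_cons_cons.mp hℓ
    rw [List.map_cons, List.sum_cons] at hf
    obtain ⟨f, rfl⟩ : ∃ f', f = f' + 1 := Nat.exists_eq_add_one.mpr (by
      have := hne.card_pos; omega)
    refine mem_insert_of_mem (mem_biUnion.mpr ⟨L, ?_, mem_image_of_mem _ (ih hℓ ?_)⟩)
    · exact mem_erase.mpr ⟨hne.ne_empty, mem_powerset.mpr hsub⟩
    · have := hne.card_pos; omega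

theorem sum_layerSeqs_le {d : ℕ} (hdep : ∀ b : E, (univ.filter fun b' => Dep S b b').card ≤ d)
    (f : ℕ) (A : Finset E) :
    ∑ ℓ ∈ layerSeqs S f A, (Real.exp 1 * d)⁻¹ ^ (ℓ.map card).sum ≤ Real.exp 1 ^ #A := by
  induction f generalizing A with
  | zero =>
    rw [layerSeqs, sum_singleton, List.map_nil, List.sum_nil, pow_zero]
    exact one_le_pow₀ (Real.one_le_exp zero_le_one)
  | succ f ih =>
    set x := (Real.exp 1 * d)⁻¹
    have hdisj : ((nbhd S A).powerset.erase ∅ : Set (Finset E)).PairwiseDisjoint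
        fun L => (layerSeqs S f L).image (L :: ·) := by
      intro L _ L' _ hne
      simp only [Function.onFun, disjoint_left, mem_image]
      rintro _ ⟨ℓ, -, rfl⟩ ⟨ℓ', -, h⟩
      exact hne (List.cons_eq_cons.mp h).1.symm
    have hcons : ∀ L ∈ (nbhd S A).powerset.erase ∅,
        ∑ ℓ ∈ (layerSeqs S f L).image (L :: ·), x ^ (ℓ.map card).sum ≤ (d : ℝ)⁻¹ ^ #L := by
      intro L _
      rw [sum_image fun _ _ _ _ h => List.cons_injective h]
      simp only [List.map_cons, List.sum_cons, pow_add, ← mul_sum]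
      calc x ^ #L * ∑ ℓ ∈ layerSeqs S f L, x ^ (ℓ.map card).sum
          ≤ x ^ #L * Real.exp 1 ^ #L := by gcongr; exact ih L
        _ = (d : ℝ)⁻¹ ^ #L := by
          simp only [x]
          rw [← mul_pow, mul_inv_rev, inv_mul_cancel_right₀ (Real.exp_ne_zero 1)]
    have hnil : [] ∉ ((nbhd S A).powerset.erase ∅).biUnion fun L =>
        (layerSeqs S f L).image (L :: ·) := by simp
    calc ∑ ℓ ∈ layerSeqs S (f + 1) A, x ^ (ℓ.map card).sum
        ≤ 1 + ∑ L ∈ (nbhd S A).powerset.erase ∅, (d : ℝ)⁻¹ ^ #L := by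
          rw [layerSeqs, sum_insert hnil, sum_biUnion hdisj, List.map_nil, List.sum_nil, pow_zero]
          exact add_le_add le_rfl (sum_le_sum hcons)
      _ = (1 + (d : ℝ)⁻¹) ^ #(nbhd S A) := by
          rw [← sum_powerset_pow_card, ← add_sum_erase _ _ (empty_mem_powerset _), card_empty,
            pow_zero]
      _ ≤ ((1 + (d : ℝ)⁻¹) ^ d) ^ #A := by
          rw [← pow_mul]
          exact pow_le_pow_right₀ (by simp) (card_nbhd_le hdep A)
      _ ≤ Real.exp 1 ^ #A := by
          gcongr
          exact Real.one_add_inv_pow_le_exp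

theorem card_filter_layerSeqs_le {d : ℕ} (hd : 0 < d)
    (hdep : ∀ b : E, (univ.filter fun b' => Dep S b b').card ≤ d) (f : ℕ) (A : Finset E)
    (t : ℕ) : (#{ℓ ∈ layerSeqs S f A | (ℓ.map card).sum = t} : ℝ)
      ≤ Real.exp 1 ^ #A * (Real.exp 1 * d) ^ t := by
  set x := (Real.exp 1 * d)⁻¹
  set T := {ℓ ∈ layerSeqs S f A | (ℓ.map card).sum = t}
  have hT : ∑ ℓ ∈ T, x ^ (ℓ.map card).sum = #T * x ^ t := by
    rw [sum_congr rfl fun ℓ hℓ => by rw [(mem_filter.mp hℓ).2], sum_const, nsmul_eq_mul]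
  have hTx : #T * x ^ t ≤ Real.exp 1 ^ #A := by
    rw [← hT]
    exact (sum_le_sum_of_subset_of_nonneg (filter_subset _ _) fun _ _ _ => by positivity).trans
      (sum_layerSeqs_le hdep f A)
  calc (#T : ℝ) = #T * x ^ t * (Real.exp 1 * d) ^ t := by
        rw [inv_pow, inv_mul_cancel_right₀ (by positivity)]
    _ ≤ Real.exp 1 ^ #A * (Real.exp 1 * d) ^ t := by gcongr

noncomputable def collectibleLayerSeqs (S : E → Finset (Fin n)) (t : ℕ) :
    Finset (List (Finset E)) :=
  univ.biUnion fun b => {ℓ ∈ layerSeqs S t {b} | (ℓ.map card).sum = t}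

theorem card_collectibleLayerSeqs_le {d : ℕ} (hd : 0 < d)
    (hdep : ∀ b : E, (univ.filter fun b' => Dep S b b').card ≤ d) (t : ℕ) :
    (#(collectibleLayerSeqs S t) : ℝ) ≤ Fintype.card E * Real.exp 1 * (Real.exp 1 * d) ^ t :=
  calc (#(collectibleLayerSeqs S t) : ℝ)
      ≤ ∑ b : E, (#{ℓ ∈ layerSeqs S t {b} | (ℓ.map card).sum = t} : ℝ) := by
        exact_mod_cast card_biUnion_le
    _ ≤ ∑ _b : E, Real.exp 1 * (Real.exp 1 * d) ^ t := by
        refine sum_le_sum fun b _ => ?_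
        simpa using card_filter_layerSeqs_le hd hdep t {b} t
    _ = Fintype.card E * Real.exp 1 * (Real.exp 1 * d) ^ t := by
        rw [sum_const, card_univ, nsmul_eq_mul, mul_assoc]

namespace WDag

variable {G : WDag n E S}

theorem layer_succ_subset (k : ℕ) : G.layer (k + 1) ⊆ nbhd S (G.layer k) := by
  intro x hx
  obtain ⟨v, hv, rfl⟩ := mem_layer.mp hx
  obtain ⟨w, hvw, hw⟩ := exists_edge_of_depth_eq_add_one hv
  exact mem_biUnion.mpr ⟨G.label w, mem_layer.mpr ⟨w, hw, rfl⟩,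
    mem_filter.mpr ⟨mem_univ _, (G.edge_dep v w hvw).symm⟩⟩

theorem layer_zero_subset {b : E} (hb : ∀ v, G.IsSink v → Dep S b (G.label v)) :
    G.layer 0 ⊆ nbhd S {b} := by
  intro x hx
  obtain ⟨v, hv, rfl⟩ := mem_layer.mp hx
  exact mem_biUnion.mpr ⟨b, mem_singleton_self b,
    mem_filter.mpr ⟨mem_univ _, hb v (isSink_of_depth_eq_zero hv)⟩⟩

theorem isLayerChain_layers (hpos : 0 < G.size) {b : E}
    (hb : ∀ v, G.IsSink v → Dep S b (G.label v)) : IsLayerChain S {b} G.layers := by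
  rw [IsLayerChain, layers, List.range_succ_eq_map, List.map_cons, List.isChain_cons_cons,
    ← List.map_cons, ← List.range_succ_eq_map, List.isChain_map, List.isChain_range_succ]
  exact ⟨⟨layer_nonempty hpos (Nat.zero_le _), layer_zero_subset hb⟩,
    fun k hk => ⟨layer_nonempty hpos hk, layer_succ_subset k⟩⟩

theorem layers_mem_collectibleLayerSeqs (hG : G.Collectible) (hpos : 0 < G.size) :
    G.layers ∈ collectibleLayerSeqs S G.size := by
  obtain ⟨b, hb⟩ := hG
  have hsum := sum_card_layers (Collectible.label_nonempty ⟨b, hb⟩)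
  exact mem_biUnion.mpr ⟨b, mem_univ b,
    mem_filter.mpr ⟨mem_layerSeqs (isLayerChain_layers hpos hb) hsum.le, hsum⟩⟩

end WDag

end

/-- If each bad event is dependent with at most d ≥ 2 bad events
(including itself) and there are m bad events, then for every positive integer
t, the number of isomorphism classes of collectible witness DAGs with exactly
t nodes is at most m·e·(e·d)^t. -/
theorem stmt8 {n : ℕ} {E : Type} [Fintype E] (S : E → Finset (Fin n)) (d t : ℕ)
    (hd : 2 ≤ d)
    (hdep : ∀ b : E, (Finset.univ.filter fun b' => Dep S b b').card ≤ d)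
    (ht : 0 < t) :
    {c : WDag.WClass n E S | ∃ G : WDag n E S,
        Quotient.mk (WDag.wdSetoid n E S) G = c ∧ WDag.Collectible G ∧ G.size = t}.Finite ∧
    (({c : WDag.WClass n E S | ∃ G : WDag n E S,
        Quotient.mk (WDag.wdSetoid n E S) G = c ∧ WDag.Collectible G ∧ G.size = t}.ncard : ℝ)
      ≤ (Fintype.card E : ℝ) * Real.exp 1 * (Real.exp 1 * d) ^ t) := by
  set 𝒞 := {c : WDag.WClass n E S | ∃ G : WDag n E S,
      Quotient.mk (WDag.wdSetoid n E S) G = c ∧ WDag.Collectible G ∧ G.size = t}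
  have hrep : ∀ c ∈ 𝒞, c.out.Collectible ∧ c.out.size = t := by
    rintro _ ⟨G, rfl, hG, rfl⟩
    have h : WDag.Iso _ G := Quotient.mk_out G
    exact ⟨hG.of_iso h.symm, WDag.size_invariant h⟩
  have hmaps : Set.MapsTo (fun c => c.out.layers) 𝒞 (collectibleLayerSeqs S t) := fun c hc => by
    obtain ⟨hG, hsize⟩ := hrep c hc
    exact hsize ▸ WDag.layers_mem_collectibleLayerSeqs hG (hsize ▸ ht)
  have hinj : Set.InjOn (fun c => c.out.layers) 𝒞 := fun c hc c' hc' h => by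
    rw [← Quotient.out_eq c, ← Quotient.out_eq c']
    exact Quotient.sound <|
      WDag.iso_of_layers_eq (hrep c hc).1.label_nonempty (hrep c' hc').1.label_nonempty h
  refine ⟨.of_injOn hmaps hinj (finite_toSet _), ?_⟩
  calc (𝒞.ncard : ℝ) ≤ #(collectibleLayerSeqs S t) := by
        exact_mod_cast (Set.ncard_le_ncard_of_injOn _ hmaps hinj (finite_toSet _)).trans_eq
          (Set.ncard_coe_finset _)
    _ ≤ _ := card_collectibleLayerSeqs_le (by omega) hdep t

end LLL
end

section
/- Let G and G' be consistent witness DAGs and let H = G ∨ G' be their merge. If there is a directed path v_1, …, v_l in H and v_l is a vertex coming from G, then all of v_1, …, v_l are vertices coming from G (and the path lies in G). -/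
open scoped Classical

namespace LLL

/-- A finite directed graph with nodes labeled by bad events. -/
structure LGraph (E : Type) where
  V : Type
  fin : Fintype V
  label : V → E
  edge : V → V → Prop

attribute [instance] LGraph.fin

namespace LGraph

variable {n : ℕ} {E : Type}

/-- A labeled digraph is a witness DAG: it is acyclic, any two nodes with
dependent labels are joined by an edge (in one direction), and nodes with
non-dependent labels have no edge. -/
def IsWDag (S : E → Finset (Fin n)) (G : LGraph E) : Prop :=
  (∀ v, ¬ Relation.TransGen G.edge v v) ∧
  (∀ v w, G.edge v w → Dep S (G.label v) (G.label w)) ∧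
  (∀ v w : G.V, v ≠ w → Dep S (G.label v) (G.label w) → G.edge v w ∨ G.edge w v)

/-- A node is a sink if it has no outgoing edge. -/
def IsSink (G : LGraph E) (v : G.V) : Prop := ∀ w, ¬ G.edge v w

/-- Induced subgraph on a set of vertices. -/
noncomputable def induce (G : LGraph E) (s : Set G.V) : LGraph E where
  V := s
  fin := (Set.toFinite s).fintype
  label := fun v => G.label v.1
  edge := fun v w => G.edge v.1 w.1

/-- The set of vertices having a directed path to at least one vertex of `s`. -/
def ReachSet (G : LGraph E) (s : Set G.V) : Set G.V :=
  {u | ∃ v ∈ s, Relation.ReflTransGen G.edge u v}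

/-- Isomorphism of labeled digraphs. -/
def LIso (G H : LGraph E) : Prop :=
  ∃ e : G.V ≃ H.V, (∀ v, H.label (e v) = G.label v) ∧
    ∀ v w, H.edge (e v) (e w) ↔ G.edge v w

/-- `G` is a prefix of `H`: `G` is (isomorphic to) the subgraph of `H` induced
on all vertices having a path to a given set of vertices. -/
def IsPrefix (G H : LGraph E) : Prop :=
  ∃ s : Set H.V, LIso G (H.induce (H.ReachSet s))

/-- The position of node v among the nodes with the same label (the number of
same-labeled nodes strictly preceding it). -/
noncomputable def pos (G : LGraph E) (v : G.V) : ℕ :=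
  (Finset.univ.filter fun u => G.label u = G.label v ∧ Relation.TransGen G.edge u v).card

/-- The node v has extended label bk = (B, k). -/
def HasExt (G : LGraph E) (v : G.V) (bk : E × ℕ) : Prop :=
  G.label v = bk.1 ∧ G.pos v = bk.2

/-- The extended label bk = (B, k) occurs in G. -/
def Occurs (G : LGraph E) (bk : E × ℕ) : Prop := ∃ v, G.HasExt v bk

/-- The number of nodes strictly preceding `v` whose label involves variable `i`. -/
noncomputable def vcount (S : E → Finset (Fin n)) (G : LGraph E) (i : Fin n) (v : G.V) : ℕ :=
  (Finset.univ.filter fun u => i ∈ S (G.label u) ∧ Relation.TransGen G.edge u v).card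

/-- Position k of the path G[i] of variable i is occupied by a node labeled b. -/
def VOccurs (S : E → Finset (Fin n)) (G : LGraph E) (i : Fin n) (k : ℕ) (b : E) : Prop :=
  ∃ v, i ∈ S (G.label v) ∧ vcount S G i v = k ∧ G.label v = b

/-- G[i] is an initial segment of G'[i] (as labeled ordered graphs). -/
def InitSeg (S : E → Finset (Fin n)) (G G' : LGraph E) (i : Fin n) : Prop :=
  ∀ k b, VOccurs S G i k b → VOccurs S G' i k b

/-- Witness DAGs G, G' are consistent: for each variable i, either G[i] is an
initial segment of G'[i] or vice versa. -/
def Consistent (S : E → Finset (Fin n)) (G G' : LGraph E) : Prop :=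
  ∀ i : Fin n, InitSeg S G G' i ∨ InitSeg S G' G i

/-- The merge G ∨ G' of two witness DAGs: one node for each extended label
occurring in G or G', with an edge between two extended labels iff G or G' has
an edge between nodes with those extended labels. -/
noncomputable def merge (G G' : LGraph E) : LGraph E where
  V := {bk : E × ℕ // G.Occurs bk ∨ G'.Occurs bk}
  fin := by
    have hsub : {bk : E × ℕ | G.Occurs bk ∨ G'.Occurs bk} ⊆
        (Set.range fun v : G.V => (G.label v, G.pos v)) ∪
        (Set.range fun v : G'.V => (G'.label v, G'.pos v)) := by
      rintro bk (⟨v, hv1, hv2⟩ | ⟨v, hv1, hv2⟩)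
      · exact Or.inl ⟨v, by simp [hv1, hv2]⟩
      · exact Or.inr ⟨v, by simp [hv1, hv2]⟩
    exact (((Set.finite_range _).union (Set.finite_range _)).subset hsub).fintype
  label := fun bk => bk.1.1
  edge := fun a b =>
    (∃ v w, G.HasExt v a.1 ∧ G.HasExt w b.1 ∧ G.edge v w) ∨
    (∃ v w, G'.HasExt v a.1 ∧ G'.HasExt w b.1 ∧ G'.edge v w)

/-- A witness DAG G is compatible with a resampling table R: for every node v,
the label of v is true on the configuration read off from R. -/
def Compat {Vl : Type} (S : E → Finset (Fin n)) (Ev : E → (Fin n → Vl) → Prop)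
    (G : LGraph E) (R : Fin n → ℕ → Vl) : Prop :=
  ∀ v : G.V, Ev (G.label v) (fun i => R i (vcount S G i v))

/-- A witness DAG is collectible to b if b is dependent with the labels of all
its sink nodes; it is collectible if it is collectible to some bad event. -/
def Collectible (S : E → Finset (Fin n)) (G : LGraph E) : Prop :=
  ∃ b : E, ∀ v, G.IsSink v → Dep S b (G.label v)

end LGraph

section Aux

open LGraph

variable {n : ℕ} {E : Type} {S : E → Finset (Fin n)}

lemma edge_of_trans {G : LGraph E} (hG : G.IsWDag S) {i : Fin n} {u v : G.V}
    (hu : i ∈ S (G.label u)) (hv : i ∈ S (G.label v))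
    (h : Relation.TransGen G.edge u v) : G.edge u v := by
  have hne : u ≠ v := fun e => hG.1 v (e ▸ h)
  rcases hG.2.2 u v hne ⟨i, Finset.mem_inter.mpr ⟨hu, hv⟩⟩ with e | e
  · exact e
  · exact absurd (h.trans (.single e)) (hG.1 u)

lemma vmono {G : LGraph E} (hG : G.IsWDag S) {i : Fin n} {u v : G.V}
    (hu : i ∈ S (G.label u)) (he : G.edge u v) :
    vcount S G i u < vcount S G i v := by
  apply Finset.card_lt_card
  rw [Finset.ssubset_iff_of_subset]
  · exact ⟨u, Finset.mem_filter.mpr ⟨Finset.mem_univ u, hu, .single he⟩,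
      fun hmem => (hG.1 u) (Finset.mem_filter.mp hmem).2.2⟩
  · intro x hx
    obtain ⟨_, hxi, hxt⟩ := Finset.mem_filter.mp hx
    exact Finset.mem_filter.mpr ⟨Finset.mem_univ x, hxi, hxt.trans (.single he)⟩

lemma vinj {G : LGraph E} (hG : G.IsWDag S) {i : Fin n} {u v : G.V}
    (hu : i ∈ S (G.label u)) (hv : i ∈ S (G.label v))
    (h : vcount S G i u = vcount S G i v) : u = v := by
  by_contra hne
  rcases hG.2.2 u v hne ⟨i, Finset.mem_inter.mpr ⟨hu, hv⟩⟩ with e | e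
  · exact absurd h (vmono hG hu e).ne
  · exact absurd h.symm (vmono hG hv e).ne

lemma vsurj {G : LGraph E} (hG : G.IsWDag S) {i : Fin n} {v : G.V}
    (hv : i ∈ S (G.label v)) {m : ℕ} (hm : m < vcount S G i v) :
    ∃ u : G.V, i ∈ S (G.label u) ∧ vcount S G i u = m ∧
      Relation.TransGen G.edge u v := by
  classical
  set F := Finset.univ.filter fun u =>
    i ∈ S (G.label u) ∧ Relation.TransGen G.edge u v with hF
  have hcard : F.card = vcount S G i v := rfl
  have hsub : F.image (vcount S G i) ⊆ Finset.range (vcount S G i v) := by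
    intro k hk
    obtain ⟨u, hu, rfl⟩ := Finset.mem_image.mp hk
    obtain ⟨_, hui, hut⟩ := Finset.mem_filter.mp hu
    exact Finset.mem_range.mpr (vmono hG hui (edge_of_trans hG hui hv hut))
  have hinj : Set.InjOn (vcount S G i) F := fun a ha b hb hab =>
    vinj hG (Finset.mem_filter.mp ha).2.1 (Finset.mem_filter.mp hb).2.1 hab
  have himg : F.image (vcount S G i) = Finset.range (vcount S G i v) := by
    apply Finset.eq_of_subset_of_card_le hsub
    rw [Finset.card_image_of_injOn hinj, hcard, Finset.card_range]
  have hmem : m ∈ F.image (vcount S G i) := himg ▸ Finset.mem_range.mpr hm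
  obtain ⟨u, hu, hum⟩ := Finset.mem_image.mp hmem
  obtain ⟨_, hui, hut⟩ := Finset.mem_filter.mp hu
  exact ⟨u, hui, hum, hut⟩

lemma cons_symm {G G' : LGraph E} (h : Consistent S G G') : Consistent S G' G :=
  fun i => (h i).symm

lemma wordAgree {G G' : LGraph E} (hG : G.IsWDag S) (hG' : G'.IsWDag S)
    (hcons : Consistent S G G') {i : Fin n} {k : ℕ} {b b' : E}
    (h : VOccurs S G i k b) (h' : VOccurs S G' i k b') : b = b' := by
  rcases hcons i with hseg | hseg
  · obtain ⟨u, hui, huk, hub⟩ := hseg k b h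
    obtain ⟨u', hui', huk', hub'⟩ := h'
    rw [← hub, ← hub']
    exact congrArg _ (vinj hG' hui hui' (huk.trans huk'.symm))
  · obtain ⟨u', hui', huk', hub'⟩ := hseg k b' h'
    obtain ⟨u, hui, huk, hub⟩ := h
    rw [← hub, ← hub']
    exact congrArg _ (vinj hG hui hui' (huk.trans huk'.symm))

lemma transfer {G G' : LGraph E} (hG : G.IsWDag S) (hG' : G'.IsWDag S)
    (hcons : Consistent S G G') {i : Fin n} {m : ℕ} {b : E}
    (h : VOccurs S G i m b) {v' : G'.V} (hv' : i ∈ S (G'.label v'))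
    (hm : m < vcount S G' i v') :
    ∃ u : G'.V, i ∈ S (G'.label u) ∧ vcount S G' i u = m ∧ G'.label u = b ∧
      Relation.TransGen G'.edge u v' := by
  obtain ⟨u, hui, hum, hut⟩ := vsurj hG' hv' hm
  have hb : b = G'.label u := wordAgree hG hG' hcons h ⟨u, hui, hum, rfl⟩
  exact ⟨u, hui, hum, hb.symm, hut⟩

lemma pos_eq_card {G : LGraph E} {i : Fin n} {v : G.V} (hv : i ∈ S (G.label v)) :
    G.pos v = (Finset.univ.filter fun u =>
      i ∈ S (G.label u) ∧ G.label u = G.label v ∧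
        Relation.TransGen G.edge u v).card := by
  unfold LGraph.pos
  congr 1
  apply Finset.filter_congr
  intro u _
  exact ⟨fun ⟨h1, h2⟩ => ⟨h1 ▸ hv, h1, h2⟩, fun ⟨_, h1, h2⟩ => ⟨h1, h2⟩⟩

lemma card_le_aux {G G' : LGraph E} (hG : G.IsWDag S) (hG' : G'.IsWDag S)
    (hcons : Consistent S G G') {i : Fin n} {v' : G'.V}
    (hi' : i ∈ S (G'.label v')) (T : Finset G.V)
    (hT : ∀ u ∈ T, i ∈ S (G.label u) ∧ G.label u = G'.label v' ∧
      vcount S G i u < vcount S G' i v') :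
    T.card ≤ (Finset.univ.filter fun u' : G'.V =>
      i ∈ S (G'.label u') ∧ G'.label u' = G'.label v' ∧
        Relation.TransGen G'.edge u' v').card := by
  classical
  have hex : ∀ u : G.V, ∃ u' : G'.V, u ∈ T → i ∈ S (G'.label u') ∧
      vcount S G' i u' = vcount S G i u ∧ G'.label u' = G.label u ∧
      Relation.TransGen G'.edge u' v' := by
    intro u
    by_cases hu : u ∈ T
    · obtain ⟨u', h1, h2, h3, h4⟩ :=
        transfer hG hG' hcons ⟨u, (hT u hu).1, rfl, rfl⟩ hi' (hT u hu).2.2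
      exact ⟨u', fun _ => ⟨h1, h2, h3, h4⟩⟩
    · exact ⟨v', fun h => absurd h hu⟩
  choose f hf using hex
  have hf1 : ∀ u ∈ T, i ∈ S (G'.label (f u)) := fun u hu => (hf u hu).1
  have hf2 : ∀ u ∈ T, vcount S G' i (f u) = vcount S G i u := fun u hu => (hf u hu).2.1
  have hf3 : ∀ u ∈ T, G'.label (f u) = G.label u := fun u hu => (hf u hu).2.2.1
  have hf4 : ∀ u ∈ T, Relation.TransGen G'.edge (f u) v' := fun u hu => (hf u hu).2.2.2
  apply Finset.card_le_card_of_injOn f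
  · intro u hu
    refine Finset.mem_filter.mpr ⟨Finset.mem_univ _, hf1 u hu, ?_, hf4 u hu⟩
    rw [hf3 u hu, (hT u hu).2.1]
  · intro u1 h1 u2 h2 heq
    have hcc : vcount S G i u1 = vcount S G i u2 := by
      rw [← hf2 u1 h1, heq, hf2 u2 h2]
    exact vinj hG (hT u1 h1).1 (hT u2 h2).1 hcc

lemma pos_le {G G' : LGraph E} (hG : G.IsWDag S) (hG' : G'.IsWDag S)
    (hcons : Consistent S G G') {i : Fin n} {v : G.V} {v' : G'.V}
    (hi : i ∈ S (G.label v)) (hlab : G.label v = G'.label v')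
    (hvc : vcount S G i v ≤ vcount S G' i v') : G.pos v ≤ G'.pos v' := by
  have hi' : i ∈ S (G'.label v') := hlab ▸ hi
  rw [pos_eq_card hi, pos_eq_card hi']
  apply card_le_aux hG hG' hcons hi'
  intro u hu
  obtain ⟨_, h1, h2, h3⟩ := Finset.mem_filter.mp hu
  exact ⟨h1, h2.trans hlab,
    lt_of_lt_of_le (vmono hG h1 (edge_of_trans hG h1 hi h3)) hvc⟩

lemma pos_lt {G G' : LGraph E} (hG : G.IsWDag S) (hG' : G'.IsWDag S)
    (hcons : Consistent S G G') {i : Fin n} {v : G.V} {v' : G'.V}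
    (hi : i ∈ S (G.label v)) (hlab : G.label v = G'.label v')
    (hvc : vcount S G i v < vcount S G' i v') : G.pos v < G'.pos v' := by
  classical
  have hi' : i ∈ S (G'.label v') := hlab ▸ hi
  rw [pos_eq_card hi, pos_eq_card hi']
  set F := Finset.univ.filter fun u =>
    i ∈ S (G.label u) ∧ G.label u = G.label v ∧
      Relation.TransGen G.edge u v with hFdef
  have hvnot : v ∉ F := fun h => hG.1 v (Finset.mem_filter.mp h).2.2.2
  have key := card_le_aux hG hG' hcons hi' (insert v F) (by
    intro u hu
    rcases Finset.mem_insert.mp hu with rfl | hu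
    · exact ⟨hi, hlab, hvc⟩
    · obtain ⟨_, h1, h2, h3⟩ := Finset.mem_filter.mp hu
      exact ⟨h1, h2.trans hlab,
        lt_trans (vmono hG h1 (edge_of_trans hG h1 hi h3)) hvc⟩)
  rw [Finset.card_insert_of_notMem hvnot] at key
  omega

lemma pos_eq {G G' : LGraph E} (hG : G.IsWDag S) (hG' : G'.IsWDag S)
    (hcons : Consistent S G G') {i : Fin n} {v : G.V} {v' : G'.V}
    (hi : i ∈ S (G.label v)) (hlab : G.label v = G'.label v')
    (hvc : vcount S G i v = vcount S G' i v') : G.pos v = G'.pos v' :=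
  le_antisymm (pos_le hG hG' hcons hi hlab hvc.le)
    (pos_le hG' hG (cons_symm hcons) (hlab ▸ hi) hlab.symm hvc.ge)

lemma vcount_eq {G G' : LGraph E} (hG : G.IsWDag S) (hG' : G'.IsWDag S)
    (hcons : Consistent S G G') {i : Fin n} {v : G.V} {v' : G'.V}
    (hi : i ∈ S (G.label v)) (hlab : G.label v = G'.label v')
    (hpos : G.pos v = G'.pos v') : vcount S G i v = vcount S G' i v' := by
  rcases lt_trichotomy (vcount S G i v) (vcount S G' i v') with h | h | h
  · exact absurd hpos (pos_lt hG hG' hcons hi hlab h).ne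
  · exact h
  · exact absurd hpos.symm
      (pos_lt hG' hG (cons_symm hcons) (hlab ▸ hi) hlab.symm h).ne

end Aux


/-- Let G, G' be consistent witness DAGs and H = G ∨ G'. If there
is a directed path in H ending at a vertex coming from G, then all vertices of
the path come from G, and the edges of the path are edges of G. -/
theorem stmt14 {n : ℕ} {E : Type} (S : E → Finset (Fin n))
    (G G' : LGraph E) (hG : G.IsWDag S) (hG' : G'.IsWDag S)
    (hcons : LGraph.Consistent S G G') :
    (∀ a b : (G.merge G').V, Relation.ReflTransGen (G.merge G').edge a b →
      G.Occurs b.1 → G.Occurs a.1) ∧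
    (∀ a b : (G.merge G').V, (G.merge G').edge a b → G.Occurs b.1 →
      ∃ v w, G.HasExt v a.1 ∧ G.HasExt w b.1 ∧ G.edge v w) := by
  have part2 : ∀ a b : (G.merge G').V, (G.merge G').edge a b → G.Occurs b.1 →
      ∃ v w, G.HasExt v a.1 ∧ G.HasExt w b.1 ∧ G.edge v w := by
    intro a b hab hb
    rcases hab with h | h
    · exact h
    · obtain ⟨v', w', hv', hw', he'⟩ := h
      obtain ⟨w, hw⟩ := hb
      obtain ⟨i, hi⟩ := hG'.2.1 v' w' he'
      rw [Finset.mem_inter] at hi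
      have hlabw : G.label w = G'.label w' := hw.1.trans hw'.1.symm
      have hiw : i ∈ S (G.label w) := hlabw ▸ hi.2
      have hposw : G.pos w = G'.pos w' := hw.2.trans hw'.2.symm
      have hvc : LGraph.vcount S G i w = LGraph.vcount S G' i w' :=
        vcount_eq hG hG' hcons hiw hlabw hposw
      have hm : LGraph.vcount S G' i v' < LGraph.vcount S G i w := by
        rw [hvc]; exact vmono hG' hi.1 he'
      have hocc : LGraph.VOccurs S G' i (LGraph.vcount S G' i v') (G'.label v') :=
        ⟨v', hi.1, rfl, rfl⟩
      obtain ⟨u, hui, huc, hulab, hut⟩ :=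
        transfer hG' hG (cons_symm hcons) hocc hiw hm
      have hedge : G.edge u w := edge_of_trans hG hui hiw hut
      have hpos : G.pos u = G'.pos v' :=
        pos_eq hG hG' hcons hui hulab huc
      exact ⟨u, w, ⟨hulab.trans hv'.1, hpos.trans hv'.2⟩, hw, hedge⟩
  refine ⟨?_, part2⟩
  intro a b hab hb
  induction hab using Relation.ReflTransGen.head_induction_on with
  | refl => exact hb
  | head h _ ih =>
      obtain ⟨v, _, hv, _, _⟩ := part2 _ _ h ih
      exact ⟨v, hv⟩

end LLL
end

section
/- Witness DAGs G_1, …, G_l are pairwise consistent if and only if there exists a witness DAG H such that G_1, …, G_l are all prefixes of H. -/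
open scoped Classical

namespace LLL

/-!
In a witness DAG the nodes whose labels involve a variable `i` form a chain under reachability,
so `G[i]` is a sequence, and a node of it is located both by its index in `G[i]` and by its
extended label `(B, k)`: its label `B` and the number `k` of earlier `B`-nodes. Consistency of
`G` and `G'` makes `G[i]` and `G'[i]` agree up to the shorter length, so these two coordinates
correspond in the same way in both graphs; in particular an edge of `G` into a node whose
extended label also occurs in `G'` is mirrored by an edge of `G'`. Hence the graph on all
extended labels occurring in some `Gⱼ`, carrying the edges of all the `Gⱼ`, is a witness DAG in
which every `Gⱼ` sits as a predecessor-closed subgraph, i.e. as a prefix.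

Conversely, a prefix of `H` has `G[i]` as an initial segment of `H[i]`, and two initial segments
of the same sequence are comparable.
-/

open Finset Relation

section ChainRank

variable {α : Type*} [Fintype α] {p : α → Prop} [DecidablePred p] {r : α → α → Prop}
  [DecidableRel r]

variable (p r) in
def chainRank (v : α) : ℕ := #{w | p w ∧ r w v}

theorem chainRank_lt_chainRank [IsTrans α r] (hirr : ∀ a, ¬ r a a) {u v : α} (hu : p u)
    (huv : r u v) : chainRank p r u < chainRank p r v := by
  refine card_lt_card ((ssubset_iff_of_subset fun w hw => ?_).2 ⟨u, ?_, ?_⟩)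
  · simp only [mem_filter, mem_univ, true_and] at hw ⊢
    exact ⟨hw.1, _root_.trans hw.2 huv⟩
  · simp [hu, huv]
  · simp [hirr u]

theorem chainRank_lt_card (hirr : ∀ a, ¬ r a a) {v : α} (hv : p v) :
    chainRank p r v < #{w | p w} := by
  refine card_lt_card ((ssubset_iff_of_subset fun w hw => ?_).2 ⟨v, ?_, ?_⟩)
  · simp only [mem_filter, mem_univ, true_and] at hw ⊢
    exact hw.1
  · simp [hv]
  · simp [hirr v]

variable [IsTrans α r] (hirr : ∀ a, ¬ r a a) (hchain : IsChain r {w | p w})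
include hirr hchain

theorem rel_iff_chainRank_lt {u v : α} (hu : p u) (hv : p v) :
    r u v ↔ chainRank p r u < chainRank p r v := by
  refine ⟨chainRank_lt_chainRank hirr hu, fun h => ?_⟩
  obtain rfl | hne := eq_or_ne u v
  · exact absurd h (lt_irrefl _)
  · exact (hchain hu hv hne).resolve_right fun hvu =>
      (chainRank_lt_chainRank hirr hv hvu).not_gt h

theorem chainRank_injOn : Set.InjOn (chainRank p r) {w | p w} := by
  intro u hu v hv h
  by_contra hne
  rcases hchain hu hv hne with huv | hvu
  · exact (chainRank_lt_chainRank hirr hu huv).ne h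
  · exact (chainRank_lt_chainRank hirr hv hvu).ne' h

theorem image_chainRank : image (chainRank p r) {w | p w} = range #{w | p w} := by
  refine eq_of_subset_of_card_le (fun k hk => ?_) ?_
  · obtain ⟨v, hv, rfl⟩ := mem_image.1 hk
    exact mem_range.2 (chainRank_lt_card hirr (mem_filter.1 hv).2)
  · rw [card_range, card_image_of_injOn]
    exact (chainRank_injOn hirr hchain).mono fun w hw => (mem_filter.1 hw).2

theorem exists_chainRank_eq {k : ℕ} (hk : k < #{w | p w}) :
    ∃ v, p v ∧ chainRank p r v = k := by
  obtain ⟨v, hv, hvk⟩ := mem_image.1 (image_chainRank hirr hchain ▸ mem_range.2 hk)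
  exact ⟨v, (mem_filter.1 hv).2, hvk⟩

end ChainRank

namespace LGraph

variable {n : ℕ} {E : Type} {S : E → Finset (Fin n)} {G G' H : LGraph E}

theorem pos_eq_chainRank (v : G.V) :
    G.pos v = chainRank (fun w => G.label w = G.label v) (TransGen G.edge) v := rfl

variable (S) in
noncomputable def pathLen (G : LGraph E) (i : Fin n) : ℕ := #{v | i ∈ S (G.label v)}

/-- The extended label `(B, k)` of a node. Nodes whose label involves no variable are isolated
and all have `pos = 0`; an arbitrary enumeration of the nodes tells them apart instead. -/
noncomputable def extLabel (S : E → Finset (Fin n)) (G : LGraph E) (v : G.V) : E × ℕ :=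
  (G.label v, if (S (G.label v)).Nonempty then G.pos v else Fintype.equivFin G.V v)

theorem extLabel_of_nonempty {v : G.V} (h : (S (G.label v)).Nonempty) :
    extLabel S G v = (G.label v, G.pos v) := by
  simp [extLabel, h]

theorem label_eq_of_extLabel_eq {v : G.V} {v' : G'.V} (h : extLabel S G' v' = extLabel S G v) :
    G'.label v' = G.label v :=
  congrArg Prod.fst h

namespace IsWDag

variable (hG : G.IsWDag S)
include hG

theorem acyclic (v : G.V) : ¬ TransGen G.edge v v := hG.1 v

theorem dep_of_edge {v w : G.V} (h : G.edge v w) : Dep S (G.label v) (G.label w) := hG.2.1 v w h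

theorem isChain {s : Set G.V} (hs : s.Pairwise fun v w => Dep S (G.label v) (G.label w)) :
    IsChain (TransGen G.edge) s :=
  fun v _ w _ hne => (hG.2.2 v w hne (hs ‹_› ‹_› hne)).imp .single .single

theorem isChain_var (i : Fin n) : IsChain (TransGen G.edge) {v | i ∈ S (G.label v)} :=
  hG.isChain fun _ hu _ hv _ => ⟨i, mem_inter.2 ⟨hu, hv⟩⟩

theorem edge_of_transGen {u v : G.V} (hdep : Dep S (G.label u) (G.label v))
    (h : TransGen G.edge u v) : G.edge u v := by
  have hne : u ≠ v := fun huv => hG.acyclic u (huv ▸ h)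
  exact (hG.2.2 u v hne hdep).resolve_right fun hvu => hG.acyclic u (h.tail hvu)

theorem transGen_iff_vcount_lt {i : Fin n} {u v : G.V} (hu : i ∈ S (G.label u))
    (hv : i ∈ S (G.label v)) : TransGen G.edge u v ↔ vcount S G i u < vcount S G i v :=
  rel_iff_chainRank_lt hG.acyclic (hG.isChain_var i) hu hv

theorem vcount_lt_pathLen {i : Fin n} {v : G.V} (hv : i ∈ S (G.label v)) :
    vcount S G i v < pathLen S G i :=
  chainRank_lt_card hG.acyclic hv

theorem exists_vcount_eq {i : Fin n} {k : ℕ} (hk : k < pathLen S G i) :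
    ∃ v, i ∈ S (G.label v) ∧ vcount S G i v = k :=
  exists_chainRank_eq hG.acyclic (hG.isChain_var i) hk

theorem vcount_injOn (i : Fin n) : Set.InjOn (vcount S G i) {v | i ∈ S (G.label v)} :=
  chainRank_injOn hG.acyclic (hG.isChain_var i)

theorem pos_injOn {b : E} (hb : (S b).Nonempty) : Set.InjOn G.pos {v | G.label v = b} := by
  have hchain : IsChain (TransGen G.edge) {v | G.label v = b} :=
    hG.isChain fun u (hu : G.label u = b) v (hv : G.label v = b) _ => by
      simpa [Dep, hu, hv] using hb
  intro u (hu : G.label u = b) v (hv : G.label v = b) h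
  rw [pos_eq_chainRank, pos_eq_chainRank, hu, hv] at h
  exact chainRank_injOn hG.acyclic hchain hu hv h

theorem extLabel_injective : Function.Injective (extLabel S G) := by
  intro u v h
  obtain ⟨hl, hk⟩ := Prod.ext_iff.1 h
  change G.label u = G.label v at hl
  by_cases hb : (S (G.label v)).Nonempty
  · simp only [extLabel, hl, if_pos hb] at hk
    exact hG.pos_injOn hb hl rfl hk
  · simp only [extLabel, hl, if_neg hb, Fin.val_inj] at hk
    exact (Fintype.equivFin G.V).injective hk

theorem lt_pathLen_of_voccurs {i : Fin n} {k : ℕ} {b : E} (h : VOccurs S G i k b) :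
    k < pathLen S G i := by
  obtain ⟨v, hv, rfl, -⟩ := h
  exact hG.vcount_lt_pathLen hv

theorem exists_voccurs {i : Fin n} {k : ℕ} (hk : k < pathLen S G i) : ∃ b, VOccurs S G i k b :=
  let ⟨v, hv, hvk⟩ := hG.exists_vcount_eq hk
  ⟨G.label v, v, hv, hvk, rfl⟩

theorem voccurs_unique {i : Fin n} {k : ℕ} {b b' : E} (h : VOccurs S G i k b)
    (h' : VOccurs S G i k b') : b = b' := by
  obtain ⟨v, hv, hvk, rfl⟩ := h
  obtain ⟨v', hv', hvk', rfl⟩ := h'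
  rw [hG.vcount_injOn i hv hv' (hvk.trans hvk'.symm)]

theorem pos_eq_card_voccurs {i : Fin n} {v : G.V} (hv : i ∈ S (G.label v)) :
    G.pos v = #{k ∈ range (vcount S G i v) | VOccurs S G i k (G.label v)} := by
  have hvar : ∀ u, G.label u = G.label v → i ∈ S (G.label u) := fun u hu => hu ▸ hv
  rw [pos, ← card_image_of_injOn (f := vcount S G i)
    ((hG.vcount_injOn i).mono fun u hu => hvar u (mem_filter.1 hu).2.1)]
  refine congrArg card (ext fun k => ?_)
  simp only [mem_image, mem_filter, mem_univ, true_and, mem_range]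
  constructor
  · rintro ⟨u, ⟨hl, huv⟩, rfl⟩
    exact ⟨(hG.transGen_iff_vcount_lt (hvar u hl) hv).1 huv, u, hvar u hl, rfl, hl⟩
  · rintro ⟨hk, u, hu, rfl, hl⟩
    exact ⟨u, ⟨hl, (hG.transGen_iff_vcount_lt hu hv).2 hk⟩, rfl⟩

end IsWDag

theorem Consistent.symm (h : Consistent S G G') : Consistent S G' G := fun i => (h i).symm

theorem initSeg_of_pathLen_le (hG : G.IsWDag S) (hG' : G'.IsWDag S) {i : Fin n}
    (hle : pathLen S G i ≤ pathLen S G' i)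
    (hagree : ∀ k b b', VOccurs S G i k b → VOccurs S G' i k b' → b = b') :
    InitSeg S G G' i := by
  intro k b h
  obtain ⟨b', h'⟩ := hG'.exists_voccurs ((hG.lt_pathLen_of_voccurs h).trans_le hle)
  rwa [hagree k b b' h h']

theorem consistent_iff_voccurs_eq (hG : G.IsWDag S) (hG' : G'.IsWDag S) :
    Consistent S G G' ↔
      ∀ i k b b', VOccurs S G i k b → VOccurs S G' i k b' → b = b' := by
  refine ⟨fun hc i k b b' h h' => ?_, fun hagree i => ?_⟩
  · rcases hc i with hi | hi
    · exact hG'.voccurs_unique (hi k b h) h'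
    · exact hG.voccurs_unique h (hi k b' h')
  · exact (le_total _ _).imp (initSeg_of_pathLen_le hG hG' · (hagree i))
      (initSeg_of_pathLen_le hG' hG · fun k b b' h h' => (hagree i k b' b h' h).symm)

section Consistent

variable (hG : G.IsWDag S) (hG' : G'.IsWDag S) (hc : Consistent S G G')
include hG hG' hc

theorem voccurs_iff_of_consistent {i : Fin n} {k : ℕ} {b : E} (hk : k < pathLen S G i)
    (hk' : k < pathLen S G' i) : VOccurs S G i k b ↔ VOccurs S G' i k b := by
  obtain ⟨b₀, h₀⟩ := hG.exists_voccurs hk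
  obtain ⟨b₀', h₀'⟩ := hG'.exists_voccurs hk'
  obtain rfl := (consistent_iff_voccurs_eq hG hG').1 hc i k b₀ b₀' h₀ h₀'
  exact ⟨fun h => hG.voccurs_unique h₀ h ▸ h₀',
    fun h => hG'.voccurs_unique h₀' h ▸ h₀⟩

theorem extLabel_eq_of_vcount_eq {i : Fin n} {v : G.V} {v' : G'.V} (hv : i ∈ S (G.label v))
    (hv' : i ∈ S (G'.label v')) (h : vcount S G' i v' = vcount S G i v) :
    extLabel S G' v' = extLabel S G v := by
  have hlabel : G'.label v' = G.label v :=
    ((consistent_iff_voccurs_eq hG hG').1 hc i _ _ _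
      ⟨v, hv, rfl, rfl⟩ ⟨v', hv', h, rfl⟩).symm
  rw [extLabel_of_nonempty ⟨i, hv'⟩, extLabel_of_nonempty ⟨i, hv⟩, hlabel,
    hG'.pos_eq_card_voccurs hv', hG.pos_eq_card_voccurs hv, h, hlabel]
  -- both positions count the earlier occurrences of the label in `G[i]` resp. `G'[i]`,
  -- and these sequences agree below the common index
  congr 2
  refine filter_congr fun k hk => (voccurs_iff_of_consistent hG hG' hc ?_ ?_).symm
  · exact (mem_range.1 hk).trans (hG.vcount_lt_pathLen hv)
  · exact (mem_range.1 hk).trans (h ▸ hG'.vcount_lt_pathLen hv')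

theorem not_vcount_lt_of_extLabel_eq {i : Fin n} {w : G.V} {w' : G'.V}
    (hw : i ∈ S (G.label w)) (h : extLabel S G' w' = extLabel S G w) :
    ¬ vcount S G' i w' < vcount S G i w := by
  intro hlt
  have hw' : i ∈ S (G'.label w') := by rw [label_eq_of_extLabel_eq h]; exact hw
  obtain ⟨u, hu, hcount⟩ := hG.exists_vcount_eq (hlt.trans (hG.vcount_lt_pathLen hw))
  obtain rfl : u = w := hG.extLabel_injective
    ((extLabel_eq_of_vcount_eq hG hG' hc hu hw' hcount.symm).symm.trans h)
  exact hlt.ne hcount.symm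

theorem vcount_eq_of_extLabel_eq {i : Fin n} {w : G.V} {w' : G'.V} (hw : i ∈ S (G.label w))
    (h : extLabel S G' w' = extLabel S G w) : vcount S G' i w' = vcount S G i w := by
  have hw' : i ∈ S (G'.label w') := by rw [label_eq_of_extLabel_eq h]; exact hw
  exact le_antisymm (not_lt.1 (not_vcount_lt_of_extLabel_eq hG' hG hc.symm hw' h.symm))
    (not_lt.1 (not_vcount_lt_of_extLabel_eq hG hG' hc hw h))

theorem exists_edge_of_vcount_lt {i : Fin n} {v : G.V} {w' : G'.V} (hv : i ∈ S (G.label v))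
    (hw' : i ∈ S (G'.label w')) (hlt : vcount S G i v < vcount S G' i w') :
    ∃ v', extLabel S G' v' = extLabel S G v ∧ G'.edge v' w' := by
  obtain ⟨v', hv', hcount⟩ := hG'.exists_vcount_eq (hlt.trans (hG'.vcount_lt_pathLen hw'))
  refine ⟨v', extLabel_eq_of_vcount_eq hG hG' hc hv hv' hcount, hG'.edge_of_transGen
    ⟨i, mem_inter.2 ⟨hv', hw'⟩⟩ ((hG'.transGen_iff_vcount_lt hv' hw').2 (hcount ▸ hlt))⟩

theorem exists_edge_of_edge {v w : G.V} {w' : G'.V} (hvw : G.edge v w)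
    (h : extLabel S G' w' = extLabel S G w) :
    ∃ v', extLabel S G' v' = extLabel S G v ∧ G'.edge v' w' := by
  obtain ⟨i, hi⟩ := hG.dep_of_edge hvw
  rw [mem_inter] at hi
  have hw' : i ∈ S (G'.label w') := by rw [label_eq_of_extLabel_eq h]; exact hi.2
  refine exists_edge_of_vcount_lt hG hG' hc hi.1 hw' ?_
  rw [vcount_eq_of_extLabel_eq hG hG' hc hi.2 h]
  exact (hG.transGen_iff_vcount_lt hi.1 hi.2).1 (.single hvw)

end Consistent

structure IsPrefixEmbedding (G H : LGraph E) (f : G.V → H.V) : Prop where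
  injective : Function.Injective f
  label_apply : ∀ v, H.label (f v) = G.label v
  edge_iff : ∀ v w, H.edge (f v) (f w) ↔ G.edge v w
  mem_range_of_edge : ∀ u v, H.edge u (f v) → u ∈ Set.range f

theorem mem_reachSet_of_edge {s : Set H.V} {u v : H.V} (h : H.edge u v)
    (hv : v ∈ H.ReachSet s) : u ∈ H.ReachSet s :=
  let ⟨w, hw, hvw⟩ := hv
  ⟨w, hw, hvw.head h⟩

theorem reachSet_eq_self {s : Set H.V} (hs : ∀ u v, H.edge u v → v ∈ s → u ∈ s) :
    H.ReachSet s = s := by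
  refine Set.Subset.antisymm ?_ fun u hu => ⟨u, hu, .refl⟩
  rintro u ⟨v, hv, huv⟩
  induction huv using ReflTransGen.head_induction_on with
  | refl => exact hv
  | head h _ ih => exact hs _ _ h ih

theorem IsPrefix.exists_isPrefixEmbedding (h : G.IsPrefix H) : ∃ f, IsPrefixEmbedding G H f := by
  obtain ⟨s, e, hl, he⟩ := h
  refine ⟨fun v => (e v).1, Subtype.val_injective.comp e.injective, hl, he, fun u v huv => ?_⟩
  exact ⟨e.symm ⟨u, mem_reachSet_of_edge huv (e v).2⟩,
    congrArg Subtype.val (e.apply_symm_apply _)⟩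

namespace IsPrefixEmbedding

variable {f : G.V → H.V} (hf : IsPrefixEmbedding G H f)
include hf

theorem isPrefix : G.IsPrefix H := by
  have hR : H.ReachSet (Set.range f) = Set.range f :=
    reachSet_eq_self fun u _ h ⟨w, hw⟩ => hf.mem_range_of_edge u w (hw ▸ h)
  refine ⟨Set.range f, Equiv.ofBijective (fun v => ⟨f v, f v, ⟨v, rfl⟩, .refl⟩)
    ⟨fun v w h => hf.injective (congrArg Subtype.val h), fun ⟨u, hu⟩ => ?_⟩,
    hf.label_apply, hf.edge_iff⟩
  obtain ⟨v, rfl⟩ := hR ▸ hu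
  exact ⟨v, rfl⟩

theorem transGen_iff {u : H.V} {v : G.V} :
    TransGen H.edge u (f v) ↔ ∃ u', f u' = u ∧ TransGen G.edge u' v := by
  refine ⟨fun h => ?_, fun ⟨u', hu', h⟩ => hu' ▸ h.lift f fun a b => (hf.edge_iff a b).2⟩
  induction h using TransGen.head_induction_on with
  | single h =>
    obtain ⟨u', rfl⟩ := hf.mem_range_of_edge _ _ h
    exact ⟨u', rfl, .single ((hf.edge_iff _ _).1 h)⟩
  | head h _ ih =>
    obtain ⟨c', rfl, hc'⟩ := ih
    obtain ⟨u', rfl⟩ := hf.mem_range_of_edge _ _ h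
    exact ⟨u', rfl, .head ((hf.edge_iff _ _).1 h) hc'⟩

theorem vcount_apply (i : Fin n) (v : G.V) : vcount S H i (f v) = vcount S G i v := by
  rw [vcount, vcount, ← card_image_of_injective _ hf.injective]
  congr 1
  ext u
  simp only [mem_filter, mem_univ, true_and, mem_image, hf.transGen_iff]
  constructor
  · rintro ⟨hi, u', rfl, h⟩
    exact ⟨u', ⟨hf.label_apply u' ▸ hi, h⟩, rfl⟩
  · rintro ⟨u', ⟨hi, h⟩, rfl⟩
    exact ⟨(hf.label_apply u').symm ▸ hi, u', rfl, h⟩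

theorem voccurs {i : Fin n} {k : ℕ} {b : E} (h : VOccurs S G i k b) : VOccurs S H i k b := by
  obtain ⟨v, hi, hk, hb⟩ := h
  exact ⟨f v, by rwa [hf.label_apply], by rwa [hf.vcount_apply], by rwa [hf.label_apply]⟩

end IsPrefixEmbedding

theorem IsPrefix.voccurs (h : G.IsPrefix H) {i : Fin n} {k : ℕ} {b : E}
    (hv : VOccurs S G i k b) : VOccurs S H i k b :=
  let ⟨_, hf⟩ := h.exists_isPrefixEmbedding
  hf.voccurs hv

section iMerge

variable {ι : Type*} [Finite ι]

noncomputable def iMerge (S : E → Finset (Fin n)) (G : ι → LGraph E) : LGraph E where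
  V := ↥(⋃ j, Set.range (extLabel S (G j)))
  fin := (Set.finite_iUnion fun _ => Set.finite_range _).fintype
  label x := x.1.1
  edge x y := ∃ j v w, extLabel S (G j) v = x.1 ∧ extLabel S (G j) w = y.1 ∧ (G j).edge v w

variable {G : ι → LGraph E} (hG : ∀ j, (G j).IsWDag S)
  (hc : ∀ j k, Consistent S (G j) (G k))
include hG

theorem dep_of_iMerge_edge {x y : (iMerge S G).V} (h : (iMerge S G).edge x y) :
    Dep S x.1.1 y.1.1 := by
  obtain ⟨j, v, w, hv, hw, hvw⟩ := h
  rw [← hv, ← hw]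
  exact (hG j).dep_of_edge hvw

include hc

theorem exists_edge_of_iMerge_edge {x y : (iMerge S G).V} (h : (iMerge S G).edge x y) {j : ι}
    {w : (G j).V} (hw : extLabel S (G j) w = y.1) :
    ∃ v, extLabel S (G j) v = x.1 ∧ (G j).edge v w := by
  obtain ⟨m, v, w₀, hv, hw₀, hvw⟩ := h
  obtain ⟨v', hv', hedge⟩ :=
    exists_edge_of_edge (hG m) (hG j) (hc m j) hvw (hw.trans hw₀.symm)
  exact ⟨v', hv'.trans hv, hedge⟩

theorem exists_transGen_of_iMerge_transGen {x y : (iMerge S G).V}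
    (h : TransGen (iMerge S G).edge x y) {j : ι} {w : (G j).V} (hw : extLabel S (G j) w = y.1) :
    ∃ v, extLabel S (G j) v = x.1 ∧ TransGen (G j).edge v w := by
  induction h generalizing w with
  | single h =>
    obtain ⟨v, hv, hvw⟩ := exists_edge_of_iMerge_edge hG hc h hw
    exact ⟨v, hv, .single hvw⟩
  | tail _ h ih =>
    obtain ⟨u, hu, huw⟩ := exists_edge_of_iMerge_edge hG hc h hw
    obtain ⟨v, hv, hvu⟩ := ih hu
    exact ⟨v, hv, hvu.tail huw⟩

theorem iMerge_edge_or_edge {x y : (iMerge S G).V} (hne : x ≠ y) (hdep : Dep S x.1.1 y.1.1) :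
    (iMerge S G).edge x y ∨ (iMerge S G).edge y x := by
  obtain ⟨j, v, hv⟩ := Set.mem_iUnion.1 x.2
  obtain ⟨k, w, hw⟩ := Set.mem_iUnion.1 y.2
  obtain ⟨i, hi⟩ := hdep
  rw [mem_inter, ← hv, ← hw] at hi
  rcases lt_trichotomy (vcount S (G j) i v) (vcount S (G k) i w) with hlt | heq | hgt
  · obtain ⟨v', hv', hedge⟩ := exists_edge_of_vcount_lt (hG j) (hG k) (hc j k) hi.1 hi.2 hlt
    exact .inl ⟨k, v', w, hv'.trans hv, hw, hedge⟩
  · refine absurd (Subtype.ext ?_) hne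
    rw [← hv, ← hw, extLabel_eq_of_vcount_eq (hG j) (hG k) (hc j k) hi.1 hi.2 heq.symm]
  · obtain ⟨w', hw', hedge⟩ := exists_edge_of_vcount_lt (hG k) (hG j) (hc k j) hi.2 hi.1 hgt
    exact .inr ⟨j, w', v, hw'.trans hw, hv, hedge⟩

theorem isWDag_iMerge : (iMerge S G).IsWDag S := by
  refine ⟨fun x hx => ?_, fun _ _ => dep_of_iMerge_edge hG,
    fun _ _ => iMerge_edge_or_edge hG hc⟩
  obtain ⟨j, v, hv⟩ := Set.mem_iUnion.1 x.2
  obtain ⟨u, hu, huv⟩ := exists_transGen_of_iMerge_transGen hG hc hx hv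
  obtain rfl := (hG j).extLabel_injective (hu.trans hv.symm)
  exact (hG j).acyclic u huv

theorem isPrefix_iMerge (j : ι) : (G j).IsPrefix (iMerge S G) := by
  refine IsPrefixEmbedding.isPrefix
    (f := fun v => ⟨extLabel S (G j) v, Set.mem_iUnion.2 ⟨j, v, rfl⟩⟩)
    ⟨fun v w h => (hG j).extLabel_injective (congrArg Subtype.val h), fun _ => rfl,
      fun v w => ⟨fun h => ?_, fun h => ⟨j, v, w, rfl, rfl, h⟩⟩, fun x w h => ?_⟩
  · obtain ⟨v', hv', hedge⟩ := exists_edge_of_iMerge_edge hG hc h rfl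
    rwa [← (hG j).extLabel_injective hv']
  · obtain ⟨v, hv, -⟩ := exists_edge_of_iMerge_edge hG hc h rfl
    exact ⟨v, Subtype.ext hv⟩

end iMerge

end LGraph

/-- Witness DAGs G₁, …, G_l are pairwise consistent iff there is a
witness DAG H of which all of them are prefixes. -/
theorem stmt17 {n : ℕ} {E : Type} (S : E → Finset (Fin n))
    (l : ℕ) (G : Fin l → LGraph E) (hG : ∀ j, (G j).IsWDag S) :
    (∀ j k, LGraph.Consistent S (G j) (G k)) ↔
      ∃ H : LGraph E, H.IsWDag S ∧ ∀ j, (G j).IsPrefix H := by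
  constructor
  · intro hc
    exact ⟨LGraph.iMerge S G, LGraph.isWDag_iMerge hG hc, LGraph.isPrefix_iMerge hG hc⟩
  · rintro ⟨H, hH, hprefix⟩ j k
    exact (LGraph.consistent_iff_voccurs_eq (hG j) (hG k)).2 fun i m b b' h h' =>
      hH.voccurs_unique ((hprefix j).voccurs h) ((hprefix k).voccurs h')

end LLL
end

section
/- Let R be a resampling table, let G be a witness DAG compatible with R, and let H be a prefix of G. Then H is compatible with R. -/
open scoped Classical

namespace LLL

namespace LGraph

variable {n : ℕ} {E : Type}

structure IsDownEmbedding (H G : LGraph E) (f : H.V → G.V) : Prop where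
  injective : Function.Injective f
  label_apply : ∀ v, G.label (f v) = H.label v
  edge_iff : ∀ v w, G.edge (f v) (f w) ↔ H.edge v w
  mem_range_of_edge : ∀ u v, G.edge u (f v) → u ∈ Set.range f

namespace IsDownEmbedding

variable {H G : LGraph E} {f : H.V → G.V}

theorem transGen_iff (hf : IsDownEmbedding H G f) {u : G.V} {v : H.V} :
    Relation.TransGen G.edge u (f v) ↔ ∃ w, f w = u ∧ Relation.TransGen H.edge w v := by
  constructor
  · intro h
    induction h using Relation.TransGen.head_induction_on with
    | single h =>
      obtain ⟨w, rfl⟩ := hf.mem_range_of_edge _ _ h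
      exact ⟨w, rfl, .single ((hf.edge_iff w v).1 h)⟩
    | head h _ ih =>
      obtain ⟨x, rfl, hxv⟩ := ih
      obtain ⟨w, rfl⟩ := hf.mem_range_of_edge _ _ h
      exact ⟨w, rfl, .head ((hf.edge_iff w x).1 h) hxv⟩
  · rintro ⟨w, rfl, h⟩
    exact h.lift f fun a b => (hf.edge_iff a b).2

theorem vcount_apply (hf : IsDownEmbedding H G f) (S : E → Finset (Fin n)) (i : Fin n)
    (v : H.V) : G.vcount S i (f v) = H.vcount S i v := by
  symm
  refine Finset.card_bij (fun u _ => f u) ?_ (fun a _ b _ h => hf.injective h) ?_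
  · intro u hu
    simp only [Finset.mem_filter, Finset.mem_univ, true_and, hf.label_apply] at hu ⊢
    exact ⟨hu.1, hf.transGen_iff.2 ⟨u, rfl, hu.2⟩⟩
  · intro u hu
    simp only [Finset.mem_filter, Finset.mem_univ, true_and] at hu
    obtain ⟨w, rfl, hw⟩ := hf.transGen_iff.1 hu.2
    refine ⟨w, ?_, rfl⟩
    simp only [Finset.mem_filter, Finset.mem_univ, true_and, ← hf.label_apply]
    exact ⟨hu.1, hw⟩

end IsDownEmbedding

theorem Compat.of_isDownEmbedding {Vl : Type} {S : E → Finset (Fin n)}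
    {Ev : E → (Fin n → Vl) → Prop} {R : Fin n → ℕ → Vl} {H G : LGraph E} {f : H.V → G.V}
    (hf : IsDownEmbedding H G f) (hG : Compat S Ev G R) : Compat S Ev H R := by
  intro v
  simpa only [hf.label_apply, hf.vcount_apply] using hG (f v)

theorem IsPrefix.exists_isDownEmbedding {H G : LGraph E} (h : H.IsPrefix G) :
    ∃ f : H.V → G.V, IsDownEmbedding H G f := by
  obtain ⟨s, e, hlabel, hedge⟩ := h
  refine ⟨fun v => (e v).1, ⟨Subtype.val_injective.comp e.injective, hlabel, hedge, ?_⟩⟩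
  rintro u v huv
  obtain ⟨x, hx, hvx⟩ := (e v).2
  exact ⟨e.symm ⟨u, x, hx, .head huv hvx⟩, congrArg Subtype.val (e.apply_symm_apply _)⟩

end LGraph

theorem stmt19_general {n : ℕ} {E Vl : Type} (S : E → Finset (Fin n))
    (Ev : E → (Fin n → Vl) → Prop)
    (R : Fin n → ℕ → Vl)
    (G H : LGraph E)
    (hcomp : LGraph.Compat S Ev G R) (hpre : H.IsPrefix G) :
    LGraph.Compat S Ev H R := by
  obtain ⟨f, hf⟩ := hpre.exists_isDownEmbedding
  exact hcomp.of_isDownEmbedding hf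

/-- If a witness DAG G is compatible with a resampling table R and
H is a prefix of G, then H is compatible with R. -/
theorem stmt19 {n : ℕ} {E Vl : Type} (S : E → Finset (Fin n))
    (Ev : E → (Fin n → Vl) → Prop)
    (hEvdep : ∀ b (x y : Fin n → Vl), (∀ i ∈ S b, x i = y i) → (Ev b x ↔ Ev b y))
    (R : Fin n → ℕ → Vl)
    (G H : LGraph E) (hG : G.IsWDag S)
    (hcomp : LGraph.Compat S Ev G R) (hpre : H.IsPrefix G) :
    LGraph.Compat S Ev H R :=
  stmt19_general S Ev R G H hcomp hpre

end LLL
end
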